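/- arXiv:1406.7614 — 7 statements merged into one kernel-verified Lean document; each statement's English description precedes it below -/
import Mathlib

section
/- Let a = (a_1, …, a_k) be a nonempty finite sequence of positive integers and let ξ = (ξ_i)_{i≥1} have the GEM(a) distribution. Then, with b := a_1 + ⋯ + a_k, for each i = 1, …, k the random variable ξ_i has the Beta(a_i, 1 + b − a_i) distribution. -/
/-!
The law of `ξ_i` lives on `[0, 1]`, so by Weierstrass approximation it is determined by its
moments. By independence, `E ξ_i^n = E ζ_i^n · ∏_{j<i} E (1 - ζ_j)^n`. With
`c_j = 1 + a_j + ⋯ + a_{k-1}` we have `ζ_j ~ Beta(a_j, c_{j+1})` and `1 - ζ_j ~ Beta(c_{j+1}, a_j)`,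
and the moment form of `Beta(p, q) · Beta(p + q, r) = Beta(p, q + r)` telescopes this product to
the `n`-th moment of `Beta(a_i, c_0 - a_i) = Beta(a_i, 1 + b - a_i)`.
-/

open MeasureTheory ProbabilityTheory

/-- The uniform distribution on the unit interval `(0,1)`. -/
noncomputable def unifMeasure : Measure ℝ := volume.restrict (Set.Ioo 0 1)

/-- The Beta distribution with parameters `a`, `b`: the measure on `(0,1)` with density
`t^(a-1) * (1-t)^(b-1) * Γ(a+b)/(Γ(a)Γ(b))`. -/
noncomputable def betaMeasure (a b : ℝ) : Measure ℝ :=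
  unifMeasure.withDensity fun t =>
    ENNReal.ofReal (t ^ (a - 1) * (1 - t) ^ (b - 1) *
      (Real.Gamma (a + b) / (Real.Gamma a * Real.Gamma b)))

open Set

lemma setIntegral_rpow_mul_one_sub_rpow_eq_beta {p q : ℝ} (hp : 0 < p) (hq : 0 < q) :
    ∫ x in Ioo (0 : ℝ) 1, x ^ (p - 1) * (1 - x) ^ (q - 1) = beta p q := by
  have h := congrArg ENNReal.toReal (lintegral_betaPDF_eq_one hp hq)
  rw [lintegral_betaPDF, ← integral_eq_lintegral_of_nonneg_ae] at h
  · simp_rw [mul_assoc, integral_const_mul] at h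
    field_simp [(beta_pos hp hq).ne'] at h
    simpa using h
  · refine ae_restrict_of_forall_mem measurableSet_Ioo fun x hx => ?_
    have := beta_pos hp hq
    have := Real.rpow_nonneg hx.1.le (p - 1)
    have := Real.rpow_nonneg (sub_nonneg.2 hx.2.le) (q - 1)
    positivity
  · fun_prop

lemma integral_betaMeasure {p q : ℝ} (hp : 0 < p) (hq : 0 < q) (g : ℝ → ℝ) :
    ∫ x, g x ∂_root_.betaMeasure p q =
      ∫ x in Ioo (0 : ℝ) 1, x ^ (p - 1) * (1 - x) ^ (q - 1) * g x / beta p q := by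
  rw [_root_.betaMeasure, integral_withDensity_eq_integral_toReal_smul (by fun_prop)
    (ae_of_all _ fun _ => ENNReal.ofReal_lt_top), unifMeasure]
  refine setIntegral_congr_fun measurableSet_Ioo fun x hx => ?_
  have := Real.rpow_nonneg hx.1.le (p - 1)
  have := Real.rpow_nonneg (sub_nonneg.2 hx.2.le) (q - 1)
  rw [ENNReal.toReal_ofReal (by positivity), smul_eq_mul, beta, div_div_eq_mul_div]
  ring

lemma integral_pow_mul_one_sub_pow_betaMeasure {p q : ℝ} (hp : 0 < p) (hq : 0 < q) (m n : ℕ) :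
    ∫ x, x ^ m * (1 - x) ^ n ∂_root_.betaMeasure p q = beta (p + m) (q + n) / beta p q := by
  rw [integral_betaMeasure hp hq, integral_div, ← setIntegral_rpow_mul_one_sub_rpow_eq_beta
    (p := p + m) (q := q + n) (by positivity) (by positivity)]
  congr 1
  refine setIntegral_congr_fun measurableSet_Ioo fun x hx => ?_
  rw [add_sub_right_comm, add_sub_right_comm q, Real.rpow_add hx.1,
    Real.rpow_add (sub_pos.2 hx.2 : (0 : ℝ) < 1 - x), Real.rpow_natCast, Real.rpow_natCast]
  ring

lemma isProbabilityMeasure_betaMeasure {p q : ℝ} (hp : 0 < p) (hq : 0 < q) :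
    IsProbabilityMeasure (_root_.betaMeasure p q) := by
  have h := integral_pow_mul_one_sub_pow_betaMeasure hp hq 0 0
  simp only [pow_zero, mul_one, integral_const, smul_eq_mul, CharP.cast_eq_zero, add_zero,
    div_self (beta_pos hp hq).ne', measureReal_def, ENNReal.toReal_eq_one_iff] at h
  exact ⟨h⟩

lemma ae_mem_Icc_betaMeasure (p q : ℝ) : ∀ᵐ x ∂_root_.betaMeasure p q, x ∈ Icc (0 : ℝ) 1 :=
  (withDensity_absolutelyContinuous _ _).ae_le
    ((ae_restrict_mem measurableSet_Ioo).mono fun _ hx => Ioo_subset_Icc_self hx)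

lemma ae_mem_Icc_of_map_eq_betaMeasure {Ω : Type*} [MeasurableSpace Ω] {μ : Measure Ω}
    {X : Ω → ℝ} (hX : AEMeasurable X μ) {p q : ℝ} (h : μ.map X = _root_.betaMeasure p q) :
    ∀ᵐ ω ∂μ, X ω ∈ Icc (0 : ℝ) 1 := by
  refine (ae_map_iff hX measurableSet_Icc).1 ?_
  rw [h]
  exact ae_mem_Icc_betaMeasure p q

/-- `E X^n` for `X ~ Beta(p, q)`, written with `Γ` rather than `beta` so that it still makes
sense, and equals `1`, at `q = 0`. -/
noncomputable def betaMoment (p q : ℝ) (n : ℕ) : ℝ :=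
  Real.Gamma (p + n) * Real.Gamma (p + q) / (Real.Gamma p * Real.Gamma (p + q + n))

lemma integral_pow_betaMeasure {p q : ℝ} (hp : 0 < p) (hq : 0 < q) (n : ℕ) :
    ∫ x, x ^ n ∂_root_.betaMeasure p q = betaMoment p q n := by
  have h := integral_pow_mul_one_sub_pow_betaMeasure hp hq n 0
  simp only [pow_zero, mul_one, CharP.cast_eq_zero, add_zero] at h
  rw [h, beta, beta, betaMoment, add_right_comm]
  have := Real.Gamma_pos_of_pos hq
  field_simp

lemma integral_one_sub_pow_betaMeasure {p q : ℝ} (hp : 0 < p) (hq : 0 < q) (n : ℕ) :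
    ∫ x, (1 - x) ^ n ∂_root_.betaMeasure p q = betaMoment q p n := by
  have h := integral_pow_mul_one_sub_pow_betaMeasure hp hq 0 n
  simp only [pow_zero, one_mul, CharP.cast_eq_zero, add_zero] at h
  rw [h, beta, beta, betaMoment, add_comm p, add_comm p, add_right_comm]
  have := Real.Gamma_pos_of_pos hp
  field_simp

lemma betaMoment_zero_right {p : ℝ} (hp : 0 < p) (n : ℕ) : betaMoment p 0 n = 1 := by
  have := Real.Gamma_pos_of_pos hp
  have := Real.Gamma_pos_of_pos (by positivity : 0 < p + n)
  simp only [betaMoment, add_zero]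
  field_simp

/-- Moment form of `Beta(p, q) · Beta(p + q, r) = Beta(p, q + r)` for independent factors. -/
lemma betaMoment_mul_betaMoment {p q : ℝ} (r : ℝ) (h : 0 < p + q) (n : ℕ) :
    betaMoment p q n * betaMoment (p + q) r n = betaMoment p (q + r) n := by
  have := Real.Gamma_pos_of_pos h
  have := Real.Gamma_pos_of_pos (by positivity : 0 < p + q + n)
  simp only [betaMoment, ← add_assoc]
  field_simp

section BetaMomentTelescoping

variable {a c : ℕ → ℝ} {i : ℕ}

lemma prod_betaMoment_eq (hc : ∀ j < i, c j = a j + c (j + 1)) (hc_pos : ∀ j, 0 < c j)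
    (n : ℕ) :
    ∏ j ∈ Finset.range i, betaMoment (c (j + 1)) (a j) n = betaMoment (c i) (c 0 - c i) n := by
  induction i with
  | zero => simp [betaMoment_zero_right (hc_pos 0)]
  | succ i ih =>
    have hci := hc i i.lt_succ_self
    have h := betaMoment_mul_betaMoment (p := c (i + 1)) (q := a i) (c 0 - c i)
      (by linarith [hc_pos i]) n
    rw [show c (i + 1) + a i = c i by linarith,
      show a i + (c 0 - c i) = c 0 - c (i + 1) by linarith] at h
    rw [Finset.prod_range_succ, ih fun j hj => hc j (hj.trans i.lt_succ_self), mul_comm, h]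

lemma betaMoment_mul_prod_betaMoment (hc : ∀ j ≤ i, c j = a j + c (j + 1))
    (hc_pos : ∀ j, 0 < c j) (n : ℕ) :
    betaMoment (a i) (c (i + 1)) n * ∏ j ∈ Finset.range i, betaMoment (c (j + 1)) (a j) n =
      betaMoment (a i) (c 0 - a i) n := by
  rw [prod_betaMoment_eq (fun j hj => hc j hj.le) hc_pos, hc i le_rfl,
    betaMoment_mul_betaMoment _ (hc i le_rfl ▸ hc_pos i)]
  congr 1
  ring

end BetaMomentTelescoping

section MomentDeterminacy

variable {μ ν : Measure ℝ} {u v : ℝ}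

lemma integrable_of_ae_mem_Icc [IsFiniteMeasure μ] (hμ : ∀ᵐ x ∂μ, x ∈ Icc u v) {f : ℝ → ℝ}
    (hf : Continuous f) : Integrable f μ := by
  obtain ⟨C, hC⟩ := isCompact_Icc.exists_bound_of_continuousOn hf.continuousOn
  exact .of_bound hf.aestronglyMeasurable C (hμ.mono hC)

lemma abs_integral_sub_le_of_ae_mem_Icc [IsFiniteMeasure μ] (hμ : ∀ᵐ x ∂μ, x ∈ Icc u v)
    {f g : ℝ → ℝ} {ε : ℝ} (hfg : ∀ x ∈ Icc u v, |f x - g x| ≤ ε) (hf : Continuous f)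
    (hg : Continuous g) :
    |∫ x, f x ∂μ - ∫ x, g x ∂μ| ≤ ε * μ.real univ := by
  rw [← integral_sub (integrable_of_ae_mem_Icc hμ hf) (integrable_of_ae_mem_Icc hμ hg)]
  exact norm_integral_le_of_norm_le_const (f := fun x => f x - g x) (hμ.mono hfg)

variable [IsFiniteMeasure μ] [IsFiniteMeasure ν]

lemma integral_eval_eq_of_moments_eq (hμ : ∀ᵐ x ∂μ, x ∈ Icc u v) (hν : ∀ᵐ x ∂ν, x ∈ Icc u v)
    (h : ∀ n : ℕ, ∫ x, x ^ n ∂μ = ∫ x, x ^ n ∂ν) (P : Polynomial ℝ) :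
    ∫ x, P.eval x ∂μ = ∫ x, P.eval x ∂ν := by
  simp only [Polynomial.eval_eq_sum_range]
  rw [integral_finsetSum _ fun i _ => integrable_of_ae_mem_Icc hμ (by fun_prop),
    integral_finsetSum _ fun i _ => integrable_of_ae_mem_Icc hν (by fun_prop)]
  simp only [integral_const_mul, h]

lemma integral_eq_of_moments_eq (hμ : ∀ᵐ x ∂μ, x ∈ Icc u v) (hν : ∀ᵐ x ∂ν, x ∈ Icc u v)
    (h : ∀ n : ℕ, ∫ x, x ^ n ∂μ = ∫ x, x ^ n ∂ν) {f : ℝ → ℝ} (hf : Continuous f) :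
    ∫ x, f x ∂μ = ∫ x, f x ∂ν := by
  set C := μ.real univ + ν.real univ + 1
  have hC : 0 < C := by positivity
  refine eq_of_forall_dist_le fun ε hε => ?_
  obtain ⟨P, hP⟩ := exists_polynomial_near_of_continuousOn u v f hf.continuousOn (ε / C)
    (div_pos hε hC)
  have hPf : ∀ x ∈ Icc u v, |f x - P.eval x| ≤ ε / C := fun x hx => by
    rw [abs_sub_comm]; exact (hP x hx).le
  have hμP := abs_integral_sub_le_of_ae_mem_Icc hμ hPf hf P.continuous
  have hνP := abs_integral_sub_le_of_ae_mem_Icc hν hPf hf P.continuous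
  rw [integral_eval_eq_of_moments_eq hμ hν h] at hμP
  rw [abs_sub_comm (∫ x, f x ∂ν)] at hνP
  calc dist (∫ x, f x ∂μ) (∫ x, f x ∂ν)
      ≤ ε / C * μ.real univ + ε / C * ν.real univ :=
        (abs_sub_le _ _ _).trans (add_le_add hμP hνP)
    _ ≤ ε := by
        rw [← mul_add, div_mul_eq_mul_div, div_le_iff₀ hC]
        exact mul_le_mul_of_nonneg_left (by linarith) hε.le

theorem ext_of_moments_eq (hμ : ∀ᵐ x ∂μ, x ∈ Icc u v) (hν : ∀ᵐ x ∂ν, x ∈ Icc u v)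
    (h : ∀ n : ℕ, ∫ x, x ^ n ∂μ = ∫ x, x ^ n ∂ν) : μ = ν :=
  ext_of_forall_integral_eq_of_IsFiniteMeasure fun f =>
    integral_eq_of_moments_eq hμ hν h f.continuous

end MomentDeterminacy

namespace ProbabilityTheory

variable {Ω : Type*} [MeasurableSpace Ω] {μ : Measure Ω}

lemma iIndepFun.integral_finset_prod_comp {ι β : Type*} [MeasurableSpace β] {X : ι → Ω → β}
    (hX : iIndepFun X μ) (mX : ∀ i, Measurable (X i)) {f : ι → β → ℝ}
    (hf : ∀ i, Measurable (f i)) (s : Finset ι) :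
    ∫ ω, ∏ i ∈ s, f i (X i ω) ∂μ = ∏ i ∈ s, ∫ ω, f i (X i ω) ∂μ := by
  have h := (hX.precomp (g := ((↑) : s → ι)) Subtype.val_injective).integral_fun_prod_comp
    (fun i => (mX i).aemeasurable) (fun i => (hf i).aestronglyMeasurable)
  have hs (g : ι → ℝ) : ∏ i ∈ s, g i = ∏ i : s, g i := (s.prod_coe_sort g).symm
  simpa only [hs] using h

open Finset in
lemma iIndepFun.integral_mul_prod_one_sub_pow {X : ℕ → Ω → ℝ} (hX : iIndepFun X μ)
    (mX : ∀ i, Measurable (X i)) (i n : ℕ) :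
    ∫ ω, (X i ω * ∏ j ∈ range i, (1 - X j ω)) ^ n ∂μ =
      (∫ ω, X i ω ^ n ∂μ) * ∏ j ∈ range i, ∫ ω, (1 - X j ω) ^ n ∂μ := by
  let f : ℕ → ℝ → ℝ := fun j => if j < i then fun x => (1 - x) ^ n else fun x => x ^ n
  have hsplit (F : ℕ → (ℝ → ℝ) → ℝ) : ∏ j ∈ range (i + 1), F j (f j) =
      F i (· ^ n) * ∏ j ∈ range i, F j (fun x => (1 - x) ^ n) := by
    rw [prod_range_succ, mul_comm]
    simp only [f, lt_irrefl, if_false]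
    congr 1
    exact prod_congr rfl fun j hj => by rw [if_pos (mem_range.1 hj)]
  have hf (j : ℕ) : Measurable (f j) := by dsimp only [f]; split_ifs <;> fun_prop
  have h := hX.integral_finset_prod_comp mX hf (range (i + 1))
  rw [hsplit fun j φ => ∫ ω, φ (X j ω) ∂μ] at h
  have hsplit_pointwise (ω : Ω) : ∏ j ∈ range (i + 1), f j (X j ω) =
      X i ω ^ n * ∏ j ∈ range i, (1 - X j ω) ^ n := hsplit fun j φ => φ (X j ω)
  simp_rw [hsplit_pointwise] at h
  simpa only [mul_pow, Finset.prod_pow] using h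

end ProbabilityTheory

section StickBreaking

open Finset

variable {Ω : Type*} [MeasurableSpace Ω] {μ : Measure Ω} {ζ : ℕ → Ω → ℝ} {a c : ℕ → ℝ} {i : ℕ}

lemma mul_prod_one_sub_mem_Icc {x : ℕ → ℝ} (hx : ∀ j ≤ i, x j ∈ Icc (0 : ℝ) 1) :
    x i * ∏ j ∈ range i, (1 - x j) ∈ Icc (0 : ℝ) 1 :=
  unitInterval.mul_mem (hx i le_rfl) <| unitInterval.prod_mem fun j hj =>
    Icc.mem_iff_one_sub_mem.1 (hx j (mem_range.1 hj).le)

lemma integral_mul_prod_one_sub_pow_eq_betaMoment (hζmeas : ∀ j, Measurable (ζ j))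
    (hζindep : iIndepFun ζ μ) (ha : ∀ j ≤ i, 0 < a j) (hc_pos : ∀ j, 0 < c j)
    (hc : ∀ j ≤ i, c j = a j + c (j + 1))
    (hζlaw : ∀ j ≤ i, μ.map (ζ j) = _root_.betaMeasure (a j) (c (j + 1))) (n : ℕ) :
    ∫ ω, (ζ i ω * ∏ j ∈ range i, (1 - ζ j ω)) ^ n ∂μ = betaMoment (a i) (c 0 - a i) n := by
  have hζ_integral (j : ℕ) (hj : j ≤ i) (g : ℝ → ℝ) (hg : Measurable g) :
      ∫ ω, g (ζ j ω) ∂μ = ∫ x, g x ∂_root_.betaMeasure (a j) (c (j + 1)) := by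
    rw [← hζlaw j hj, integral_map (hζmeas j).aemeasurable hg.aestronglyMeasurable]
  have hζ_moment (j : ℕ) (hj : j ∈ range i) :
      ∫ ω, (1 - ζ j ω) ^ n ∂μ = betaMoment (c (j + 1)) (a j) n := by
    have hj := (mem_range.1 hj).le
    rw [hζ_integral j hj (fun x => (1 - x) ^ n) (by fun_prop),
      integral_one_sub_pow_betaMeasure (ha j hj) (hc_pos _)]
  rw [hζindep.integral_mul_prod_one_sub_pow hζmeas, hζ_integral i le_rfl (· ^ n) (by fun_prop),
    integral_pow_betaMeasure (ha i le_rfl) (hc_pos _), prod_congr rfl hζ_moment,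
    betaMoment_mul_prod_betaMoment hc hc_pos]

theorem map_mul_prod_one_sub_eq_betaMeasure (hζmeas : ∀ j, Measurable (ζ j))
    (hζindep : iIndepFun ζ μ) (ha : ∀ j ≤ i, 0 < a j) (hc_pos : ∀ j, 0 < c j)
    (hc : ∀ j ≤ i, c j = a j + c (j + 1))
    (hζlaw : ∀ j ≤ i, μ.map (ζ j) = _root_.betaMeasure (a j) (c (j + 1))) :
    μ.map (fun ω => ζ i ω * ∏ j ∈ range i, (1 - ζ j ω)) =
      _root_.betaMeasure (a i) (c 0 - a i) := by
  have := hζindep.isProbabilityMeasure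
  have hmeas : Measurable fun ω => ζ i ω * ∏ j ∈ range i, (1 - ζ j ω) := by fun_prop
  have hpos : 0 < c 0 - a i := by
    have hc_sub : c 0 - c i = ∑ j ∈ range i, a j := by
      rw [← sum_range_sub']
      exact sum_congr rfl fun j hj => by linarith [hc j (mem_range.1 hj).le]
    linarith [sum_nonneg fun j hj => (ha j (mem_range.1 hj).le).le, hc i le_rfl, hc_pos (i + 1)]
  have := Measure.isProbabilityMeasure_map (μ := μ) hmeas.aemeasurable
  have := isProbabilityMeasure_betaMeasure (ha i le_rfl) hpos
  have hζ_mem : ∀ᵐ ω ∂μ, ∀ j ≤ i, ζ j ω ∈ Icc (0 : ℝ) 1 := by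
    simpa only [Finset.mem_Iic] using (Filter.eventually_all_finset (Iic i)).2 fun j hj =>
      ae_mem_Icc_of_map_eq_betaMeasure (hζmeas j).aemeasurable (hζlaw j (Finset.mem_Iic.1 hj))
  refine ext_of_moments_eq ((ae_map_iff hmeas.aemeasurable measurableSet_Icc).2
    (hζ_mem.mono fun _ => mul_prod_one_sub_mem_Icc)) (ae_mem_Icc_betaMeasure _ _) fun n => ?_
  rw [integral_map hmeas.aemeasurable (by fun_prop),
    integral_mul_prod_one_sub_pow_eq_betaMoment hζmeas hζindep ha hc_pos hc hζlaw,
    integral_pow_betaMeasure (ha i le_rfl) hpos]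

end StickBreaking

theorem gem_marginals_beta_general
    {Ω : Type*} [MeasurableSpace Ω] (μ : Measure Ω)
    (k : ℕ) (a : ℕ → ℕ) (ha : ∀ i < k, 0 < a i)
    (ζ : ℕ → Ω → ℝ) (hζmeas : ∀ i, Measurable (ζ i))
    (hζindep : iIndepFun ζ μ)
    (hζlaw : ∀ i < k, Measure.map (ζ i) μ =
      _root_.betaMeasure (a i) (1 + ∑ j ∈ Finset.Ico (i + 1) k, (a j : ℝ)))
    (ξ : ℕ → Ω → ℝ)
    (hξ : ∀ i ω, ξ i ω = ζ i ω * ∏ j ∈ Finset.range i, (1 - ζ j ω)) :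
    ∀ i < k, Measure.map (ξ i) μ =
      _root_.betaMeasure (a i) (1 + (∑ j ∈ Finset.range k, (a j : ℝ)) - a i) := by
  intro i hi
  set c : ℕ → ℝ := fun j => 1 + ∑ l ∈ Finset.Ico j k, (a l : ℝ)
  have hc (j : ℕ) (hj : j ≤ i) : c j = a j + c (j + 1) := by
    simp only [c, Finset.sum_eq_sum_Ico_succ_bot (hj.trans_lt hi)]
    ring
  have hc0 : 1 + ∑ j ∈ Finset.range k, (a j : ℝ) = c 0 := by rw [Finset.range_eq_Ico]
  rw [hc0, show ξ i = _ from funext (hξ i)]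
  exact map_mul_prod_one_sub_eq_betaMeasure hζmeas hζindep (a := fun j => (a j : ℝ)) (c := c)
    (fun j hj => Nat.cast_pos.2 (ha j (hj.trans_lt hi))) (fun j => by positivity) hc
    (fun j hj => hζlaw j (hj.trans_lt hi))

/-- If `ξ = (ξ_i)` is GEM(a)-distributed for a nonempty finite sequence
`a = (a 0, …, a (k-1))` of positive integers, then `ξ_i ~ Beta(a_i, 1 + b - a_i)` for
`i = 0, …, k-1` (0-indexed), where `b = a_0 + ⋯ + a_{k-1}`. -/
theorem gem_marginals_beta
    {Ω : Type*} [MeasurableSpace Ω] (μ : Measure Ω) [IsProbabilityMeasure μ]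
    (k : ℕ) (hk : 0 < k) (a : ℕ → ℕ) (ha : ∀ i < k, 0 < a i)
    (ζ : ℕ → Ω → ℝ) (hζmeas : ∀ i, Measurable (ζ i))
    (hζindep : iIndepFun ζ μ)
    (hζlaw : ∀ i < k, Measure.map (ζ i) μ =
      _root_.betaMeasure (a i) (1 + ∑ j ∈ Finset.Ico (i + 1) k, (a j : ℝ)))
    (hζlaw' : ∀ i, k ≤ i → Measure.map (ζ i) μ = unifMeasure)
    (ξ : ℕ → Ω → ℝ)
    (hξ : ∀ i ω, ξ i ω = ζ i ω * ∏ j ∈ Finset.range i, (1 - ζ j ω)) :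
    ∀ i < k, Measure.map (ξ i) μ =
      _root_.betaMeasure (a i) (1 + (∑ j ∈ Finset.range k, (a j : ℝ)) - a i) :=
  gem_marginals_beta_general μ k a ha ζ hζmeas hζindep hζlaw ξ hξ
end

section
/- Let a be a finite (possibly empty) sequence of positive integers and let ξ = (ξ_i)_{i≥1} have the GEM(a) distribution. Then the series ∑_{i=1}^∞ ξ_i log ξ_i converges absolutely almost surely and, with C(ξ) := 1 + ∑_{i=1}^∞ ξ_i log ξ_i, one has E[|C(ξ)|^p] < ∞ for every real p ≥ 1. -/
/-!
Write `R i = ∏ j < i, (1 - ζ j)` for the mass left after `i` breaks, so that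
`ξ i = ζ i * R i ≤ R i`. Since `|x log x| ≤ 2 √x` on `[0, 1]`, the series is dominated termwise by `2 ∑ √(R i)`. By
independence, `E[R i ^ (p / 2)]` is a product of moments of the factors `1 - ζ j`; each is at most
`1`, and the uniform factors `j ≥ k` contribute exactly `1 / (p / 2 + 1)`. Hence `‖√(R i)‖_p` decays
geometrically in `i`, and Minkowski's inequality for series bounds `‖1 + 2 ∑ √(R i)‖_p`. The case
`p = 1` yields the almost sure absolute convergence.
-/

open MeasureTheory ProbabilityTheory

open Finset
open scoped ENNReal

theorem ENNReal.iSup_rpow {ι : Type*} (f : ι → ℝ≥0∞) {q : ℝ} (hq : 0 < q) :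
    (⨆ i, f i) ^ q = ⨆ i, f i ^ q :=
  (ENNReal.orderIsoRpow q hq).map_iSup f

theorem ENNReal.prod_range_le_pow_sub {f : ℕ → ℝ≥0∞} {c : ℝ≥0∞} {k : ℕ}
    (hf_le_one : ∀ j < k, f j ≤ 1) (hf_le : ∀ j, k ≤ j → f j ≤ c) (n : ℕ) :
    ∏ j ∈ range n, f j ≤ c ^ (n - k) := by
  induction n with
  | zero => simp
  | succ n ih =>
    rw [prod_range_succ]
    rcases lt_or_ge n k with hn | hn
    · rw [show n + 1 - k = n - k by omega]
      simpa using mul_le_mul' ih (hf_le_one n hn)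
    · rw [show n + 1 - k = n - k + 1 by omega, pow_succ]
      exact mul_le_mul' ih (hf_le n hn)

theorem ENNReal.tsum_pow_sub_ne_top {r : ℝ≥0∞} (hr : r < 1) (k : ℕ) :
    ∑' i, r ^ (i - k) ≠ ⊤ := by
  rw [← ENNReal.summable.sum_add_tsum_nat_add' (k := k)]
  simp only [Nat.add_sub_cancel, ENNReal.tsum_geometric]
  exact ENNReal.add_ne_top.2 ⟨ENNReal.sum_ne_top.2 fun i _ => ENNReal.pow_ne_top
    (hr.trans ENNReal.one_lt_top).ne, ENNReal.inv_ne_top.2 (tsub_pos_of_lt hr).ne'⟩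

theorem Real.abs_mul_log_le_two_mul_sqrt {x : ℝ} (hx0 : 0 ≤ x) (hx1 : x ≤ 1) :
    |x * Real.log x| ≤ 2 * √x := by
  rcases hx0.eq_or_lt with rfl | hx0
  · simp
  have h := Real.abs_log_mul_self_rpow_lt x (1 / 2) hx0 hx1 (by norm_num)
  rw [← Real.sqrt_eq_rpow] at h
  calc |x * Real.log x| = √x * |Real.log x * √x| := by
        rw [abs_mul, abs_mul, abs_of_nonneg hx0.le, abs_of_nonneg (Real.sqrt_nonneg x)]
        nth_rw 1 [← Real.mul_self_sqrt hx0.le]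
        ring
    _ ≤ √x * 2 := by gcongr; exact (h.trans_eq (by norm_num)).le
    _ = 2 * √x := mul_comm _ _

theorem ofReal_abs_one_add_tsum_rpow_le {f : ℕ → ℝ} {g : ℕ → ℝ≥0∞} (h : ∀ i, ‖f i‖ₑ ≤ g i)
    {p : ℝ} (hp : 0 ≤ p) : ENNReal.ofReal (|1 + ∑' i, f i| ^ p) ≤ (1 + ∑' i, g i) ^ p := by
  rw [← ENNReal.ofReal_rpow_of_nonneg (abs_nonneg _) hp, ← Real.enorm_eq_ofReal_abs]
  gcongr
  calc ‖1 + ∑' i, f i‖ₑ ≤ ‖(1 : ℝ)‖ₑ + ‖∑' i, f i‖ₑ := enorm_add_le _ _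
    _ ≤ 1 + ∑' i, g i := by
      rw [enorm_one]
      exact add_le_add le_rfl (enorm_tsum_le_tsum_enorm.trans (ENNReal.tsum_le_tsum h))

section Minkowski

variable {α : Type*} [MeasurableSpace α] {μ : Measure α} {p : ℝ}

theorem eLpNorm'_tsum_le {f : ℕ → α → ℝ≥0∞} (hf : ∀ i, AEMeasurable (f i) μ) (hp : 1 ≤ p) :
    eLpNorm' (fun a => ∑' i, f i a) p μ ≤ ∑' i, eLpNorm' (f i) p μ := by
  have hp0 : 0 < p := zero_lt_one.trans_le hp
  have hmono : ∀ a, Monotone fun n => (∑ i ∈ range n, f i a) ^ p := fun a m n hmn =>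
    ENNReal.rpow_le_rpow (sum_le_sum_of_subset (range_subset_range.2 hmn)) hp0.le
  calc eLpNorm' (fun a => ∑' i, f i a) p μ
      = ⨆ n, eLpNorm' (∑ i ∈ range n, f i) p μ := by
        simp only [eLpNorm', enorm_eq_self, ENNReal.tsum_eq_iSup_nat, ENNReal.iSup_rpow _ hp0,
          Finset.sum_apply]
        rw [lintegral_iSup' (fun n => (aemeasurable_fun_sum _ fun i _ => hf i).pow_const p)
          (ae_of_all _ hmono), ENNReal.iSup_rpow _ (by positivity)]
    _ ≤ ⨆ n, ∑ i ∈ range n, eLpNorm' (f i) p μ :=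
        iSup_mono fun n => eLpNorm'_sum_le (fun i _ => (hf i).aestronglyMeasurable) hp
    _ = ∑' i, eLpNorm' (f i) p μ := ENNReal.tsum_eq_iSup_nat.symm

theorem lintegral_rpow_tsum_lt_top_of_le_geometric {f : ℕ → α → ℝ≥0∞}
    (hf : ∀ i, AEMeasurable (f i) μ) (hp : 1 ≤ p) {C c : ℝ≥0∞} (hC : C ≠ ⊤) (hc : c < 1) {k : ℕ}
    (hbound : ∀ i, ∫⁻ a, f i a ^ p ∂μ ≤ C * c ^ (i - k)) :
    ∫⁻ a, (∑' i, f i a) ^ p ∂μ < ⊤ := by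
  have hp0 : 0 < p := zero_lt_one.trans_le hp
  have hnorm : ∀ i, eLpNorm' (f i) p μ ≤ C ^ (1 / p) * (c ^ (1 / p)) ^ (i - k) := fun i => by
    rw [eLpNorm', ← ENNReal.rpow_natCast, ← ENNReal.rpow_mul, mul_comm (1 / p),
      ENNReal.rpow_mul, ENNReal.rpow_natCast, ← ENNReal.mul_rpow_of_nonneg _ _ (by positivity)]
    simp only [enorm_eq_self]
    gcongr
    exact hbound i
  have hfin : eLpNorm' (fun a => ∑' i, f i a) p μ < ⊤ := calc
    _ ≤ ∑' i, eLpNorm' (f i) p μ := eLpNorm'_tsum_le hf hp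
    _ ≤ ∑' i, C ^ (1 / p) * (c ^ (1 / p)) ^ (i - k) := ENNReal.tsum_le_tsum hnorm
    _ < ⊤ := by
      rw [ENNReal.tsum_mul_left]
      exact ENNReal.mul_lt_top (ENNReal.rpow_lt_top_of_nonneg (by positivity) hC)
        (ENNReal.tsum_pow_sub_ne_top (ENNReal.rpow_lt_one hc (by positivity)) k).lt_top
  simpa only [enorm_eq_self] using lintegral_rpow_enorm_lt_top_of_eLpNorm'_lt_top hp0 hfin

end Minkowski

theorem ae_mem_Ioo_of_map_absolutelyContinuous {Ω : Type*} [MeasurableSpace Ω] {μ : Measure Ω}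
    {X : Ω → ℝ} (hX : AEMeasurable X μ) (h : μ.map X ≪ unifMeasure) :
    ∀ᵐ ω ∂μ, X ω ∈ Set.Ioo 0 1 :=
  ae_of_ae_map hX (h.ae_le (ae_restrict_mem measurableSet_Ioo))

theorem betaMeasure_absolutelyContinuous (a b : ℝ) : _root_.betaMeasure a b ≪ unifMeasure :=
  withDensity_absolutelyContinuous _ _

theorem lintegral_unifMeasure_ofReal_one_sub_rpow {q : ℝ} (hq : -1 < q) :
    ∫⁻ t, ENNReal.ofReal (1 - t) ^ q ∂unifMeasure = ENNReal.ofReal (1 / (q + 1)) := by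
  have hint : IntervalIntegrable (fun t : ℝ => (1 - t) ^ q) volume 0 1 := by
    simpa using
      ((intervalIntegral.intervalIntegrable_rpow' (a := 0) (b := 1) hq).comp_sub_left 1).symm
  calc ∫⁻ t, ENNReal.ofReal (1 - t) ^ q ∂unifMeasure
      = ∫⁻ t in Set.Ioo 0 1, ENNReal.ofReal ((1 - t) ^ q) := by
        refine setLIntegral_congr_fun measurableSet_Ioo fun t ht => ?_
        exact ENNReal.ofReal_rpow_of_pos (by linarith [ht.2])
    _ = ENNReal.ofReal (∫ t in (0 : ℝ)..1, (1 - t) ^ q) := by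
        rw [intervalIntegral.integral_of_le zero_le_one, integral_Ioc_eq_integral_Ioo,
          ofReal_integral_eq_lintegral_ofReal (hint.1.mono_set Set.Ioo_subset_Ioc_self)
            (ae_restrict_of_forall_mem measurableSet_Ioo fun t ht =>
              Real.rpow_nonneg (by linarith [ht.2]) q)]
    _ = ENNReal.ofReal (1 / (q + 1)) := by
        rw [intervalIntegral.integral_comp_sub_left (fun t : ℝ => t ^ q) 1]
        norm_num [integral_rpow (Or.inl hq), Real.zero_rpow (by linarith : q + 1 ≠ 0)]

section StickBreaking

variable {Ω : Type*} {ζ : ℕ → Ω → ℝ}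

/-- The `R i` of the header, valued in `ℝ≥0∞` so that its powers and series need no side
conditions. -/
noncomputable def stickRemainder (ζ : ℕ → Ω → ℝ) (i : ℕ) (ω : Ω) : ℝ≥0∞ :=
  ∏ j ∈ range i, ENNReal.ofReal (1 - ζ j ω)

theorem enorm_mul_log_le_stickRemainder {ω : Ω} (hζ : ∀ j, ζ j ω ∈ Set.Icc 0 1) (i : ℕ) :
    ‖(ζ i ω * ∏ j ∈ range i, (1 - ζ j ω)) * Real.log (ζ i ω * ∏ j ∈ range i, (1 - ζ j ω))‖ₑ ≤
      2 * stickRemainder ζ i ω ^ (2⁻¹ : ℝ) := by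
  set y := ∏ j ∈ range i, (1 - ζ j ω)
  have hy0 : 0 ≤ y := prod_nonneg fun j _ => sub_nonneg.2 (hζ j).2
  have hy1 : y ≤ 1 := prod_le_one (fun j _ => sub_nonneg.2 (hζ j).2)
    fun j _ => sub_le_self _ (hζ j).1
  have hx0 : 0 ≤ ζ i ω * y := mul_nonneg (hζ i).1 hy0
  have hxy : ζ i ω * y ≤ y := mul_le_of_le_one_left hy0 (hζ i).2
  calc ‖ζ i ω * y * Real.log (ζ i ω * y)‖ₑ
      = ENNReal.ofReal |ζ i ω * y * Real.log (ζ i ω * y)| := Real.enorm_eq_ofReal_abs _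
    _ ≤ ENNReal.ofReal (2 * √y) := ENNReal.ofReal_le_ofReal <|
        (Real.abs_mul_log_le_two_mul_sqrt hx0 (hxy.trans hy1)).trans (by gcongr)
    _ = 2 * stickRemainder ζ i ω ^ (2⁻¹ : ℝ) := by
        rw [ENNReal.ofReal_mul zero_le_two, Real.sqrt_eq_rpow, ← one_div,
          ← ENNReal.ofReal_rpow_of_nonneg hy0 (by norm_num), ENNReal.ofReal_ofNat, stickRemainder,
          ENNReal.ofReal_prod_of_nonneg fun j _ => sub_nonneg.2 (hζ j).2]

variable [MeasurableSpace Ω] {μ : Measure Ω} {k : ℕ}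

theorem lintegral_stickRemainder_rpow_le (hζmeas : ∀ i, Measurable (ζ i))
    (hζindep : iIndepFun ζ μ)
    (hζnonneg : ∀ j < k, ∀ᵐ ω ∂μ, 0 ≤ ζ j ω) (hζunif : ∀ j, k ≤ j → μ.map (ζ j) = unifMeasure)
    {q : ℝ} (hq : 0 < q) (n : ℕ) :
    ∫⁻ ω, stickRemainder ζ n ω ^ q ∂μ ≤ ENNReal.ofReal (1 / (q + 1)) ^ (n - k) := by
  have := hζindep.isProbabilityMeasure
  have hmeas : Measurable fun t : ℝ => ENNReal.ofReal (1 - t) ^ q := by fun_prop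
  simp only [stickRemainder, ← ENNReal.prod_rpow_of_nonneg hq.le]
  rw [lintegral_prod_eq_prod_lintegral_of_indepFun _ (fun j ω => ENNReal.ofReal (1 - ζ j ω) ^ q)
    (hζindep.comp _ fun _ => hmeas) fun j => hmeas.comp (hζmeas j)]
  refine ENNReal.prod_range_le_pow_sub (fun j hj => ?_) (fun j hj => ?_) n
  · calc ∫⁻ ω, ENNReal.ofReal (1 - ζ j ω) ^ q ∂μ ≤ ∫⁻ _, 1 ∂μ := lintegral_mono_ae <|
          (hζnonneg j hj).mono fun ω hω =>
            ENNReal.rpow_le_one (ENNReal.ofReal_le_one.2 (by linarith)) hq.le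
      _ = 1 := by simp
  · rw [← lintegral_map hmeas (hζmeas j), hζunif j hj,
      lintegral_unifMeasure_ofReal_one_sub_rpow (by linarith)]

theorem lintegral_rpow_tsum_stickRemainder_sqrt_lt_top (hζmeas : ∀ i, Measurable (ζ i))
    (hζindep : iIndepFun ζ μ)
    (hζnonneg : ∀ j < k, ∀ᵐ ω ∂μ, 0 ≤ ζ j ω) (hζunif : ∀ j, k ≤ j → μ.map (ζ j) = unifMeasure)
    {p : ℝ} (hp : 1 ≤ p) :
    ∫⁻ ω, (∑' i, 2 * stickRemainder ζ i ω ^ (2⁻¹ : ℝ)) ^ p ∂μ < ⊤ := by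
  have hp0 : 0 < p := zero_lt_one.trans_le hp
  refine lintegral_rpow_tsum_lt_top_of_le_geometric (fun i => by unfold stickRemainder; fun_prop) hp
    (C := 2 ^ p) (ENNReal.rpow_ne_top_of_nonneg hp0.le ENNReal.ofNat_ne_top)
    (c := ENNReal.ofReal (1 / (p / 2 + 1))) (k := k) ?_ fun i => ?_
  · rw [← ENNReal.ofReal_one, ENNReal.ofReal_lt_ofReal_iff one_pos, div_lt_one] <;> linarith
  calc ∫⁻ ω, (2 * stickRemainder ζ i ω ^ (2⁻¹ : ℝ)) ^ p ∂μ
      = 2 ^ p * ∫⁻ ω, stickRemainder ζ i ω ^ (p / 2) ∂μ := by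
        simp only [ENNReal.mul_rpow_of_nonneg _ _ hp0.le, ← ENNReal.rpow_mul]
        rw [lintegral_const_mul' _ _ (ENNReal.rpow_ne_top_of_nonneg hp0.le ENNReal.ofNat_ne_top)]
        congr 2 with ω
        ring_nf
    _ ≤ 2 ^ p * ENNReal.ofReal (1 / (p / 2 + 1)) ^ (i - k) := by
        gcongr
        exact lintegral_stickRemainder_rpow_le hζmeas hζindep hζnonneg hζunif (by positivity) i

end StickBreaking

theorem gem_C_memLp_general
    {Ω : Type*} [MeasurableSpace Ω] (μ : Measure Ω)
    (k : ℕ) (a : ℕ → ℕ)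
    (ζ : ℕ → Ω → ℝ) (hζmeas : ∀ i, Measurable (ζ i))
    (hζindep : iIndepFun ζ μ)
    (hζlaw : ∀ i < k, Measure.map (ζ i) μ =
      _root_.betaMeasure (a i) (1 + ∑ j ∈ Finset.Ico (i + 1) k, (a j : ℝ)))
    (hζlaw' : ∀ i, k ≤ i → Measure.map (ζ i) μ = unifMeasure)
    (ξ : ℕ → Ω → ℝ)
    (hξ : ∀ i ω, ξ i ω = ζ i ω * ∏ j ∈ Finset.range i, (1 - ζ j ω)) :
    (∀ᵐ ω ∂μ, Summable fun i => |ξ i ω * Real.log (ξ i ω)|) ∧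
    ∀ p : ℝ, 1 ≤ p →
      ∫⁻ ω, ENNReal.ofReal (|1 + ∑' i, ξ i ω * Real.log (ξ i ω)| ^ p) ∂μ < ⊤ := by
  have := hζindep.isProbabilityMeasure
  have hζIcc : ∀ j, ∀ᵐ ω ∂μ, ζ j ω ∈ Set.Icc 0 1 := fun j => by
    refine (ae_mem_Ioo_of_map_absolutelyContinuous (hζmeas j).aemeasurable ?_).mono
      fun _ h => Set.Ioo_subset_Icc_self h
    rcases lt_or_ge j k with hj | hj
    · exact hζlaw j hj ▸ betaMeasure_absolutelyContinuous _ _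
    · exact (hζlaw' j hj).le.absolutelyContinuous
  set g : ℕ → Ω → ℝ≥0∞ := fun i ω => 2 * stickRemainder ζ i ω ^ (2⁻¹ : ℝ)
  have hdom : ∀ᵐ ω ∂μ, ∀ i, ‖ξ i ω * Real.log (ξ i ω)‖ₑ ≤ g i ω := by
    filter_upwards [ae_all_iff.2 hζIcc] with ω hω i
    rw [hξ]
    exact enorm_mul_log_le_stickRemainder hω i
  have hgmeas : ∀ i, Measurable (g i) := fun i => by
    simp only [g, stickRemainder]
    fun_prop
  have hg : ∀ p : ℝ, 1 ≤ p → ∫⁻ ω, (∑' i, g i ω) ^ p ∂μ < ⊤ := fun p hp =>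
    lintegral_rpow_tsum_stickRemainder_sqrt_lt_top hζmeas hζindep
      (fun j _ => (hζIcc j).mono fun _ h => h.1) hζlaw' hp
  refine ⟨?_, fun p hp => ?_⟩
  · have hfin := ae_lt_top' (AEMeasurable.tsum fun i => (hgmeas i).aemeasurable)
      (by simpa using (hg 1 le_rfl).ne)
    filter_upwards [hdom, hfin] with ω hdom hfin
    simpa only [Real.norm_eq_abs] using tsum_enorm_ne_top_iff_summable_norm.1
      (ne_top_of_le_ne_top hfin.ne (ENNReal.tsum_le_tsum hdom))
  · calc ∫⁻ ω, ENNReal.ofReal (|1 + ∑' i, ξ i ω * Real.log (ξ i ω)| ^ p) ∂μ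
        ≤ ∫⁻ ω, (1 + ∑' i, g i ω) ^ p ∂μ :=
          lintegral_mono_ae (hdom.mono fun ω h => ofReal_abs_one_add_tsum_rpow_le h (by linarith))
      _ < ⊤ := ENNReal.lintegral_rpow_add_lt_top_of_lintegral_rpow_lt_top aemeasurable_const
          (by simp) (hg p hp) hp

/-- For `ξ ~ GEM(a)` with `a` a finite (possibly empty) sequence of positive
integers, the series `∑ ξ_i log ξ_i` converges absolutely a.s., and for every `p ≥ 1` the
random variable `C(ξ) = 1 + ∑ ξ_i log ξ_i` satisfies `E[|C(ξ)|^p] < ∞`. -/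
theorem gem_C_memLp
    {Ω : Type*} [MeasurableSpace Ω] (μ : Measure Ω) [IsProbabilityMeasure μ]
    (k : ℕ) (a : ℕ → ℕ) (ha : ∀ i < k, 0 < a i)
    (ζ : ℕ → Ω → ℝ) (hζmeas : ∀ i, Measurable (ζ i))
    (hζindep : iIndepFun ζ μ)
    (hζlaw : ∀ i < k, Measure.map (ζ i) μ =
      _root_.betaMeasure (a i) (1 + ∑ j ∈ Finset.Ico (i + 1) k, (a j : ℝ)))
    (hζlaw' : ∀ i, k ≤ i → Measure.map (ζ i) μ = unifMeasure)
    (ξ : ℕ → Ω → ℝ)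
    (hξ : ∀ i ω, ξ i ω = ζ i ω * ∏ j ∈ Finset.range i, (1 - ζ j ω)) :
    (∀ᵐ ω ∂μ, Summable fun i => |ξ i ω * Real.log (ξ i ω)|) ∧
    ∀ p : ℝ, 1 ≤ p →
      ∫⁻ ω, ENNReal.ofReal (|1 + ∑' i, ξ i ω * Real.log (ξ i ω)| ^ p) ∂μ < ⊤ :=
  gem_C_memLp_general μ k a ζ hζmeas hζindep hζlaw hζlaw' ξ hξ
end

section
/- Let a = (a_1, …, a_k) be a nonempty finite sequence of positive integers with b := a_1 + ⋯ + a_k, and let ξ = (ξ_i)_{i≥1} have the GEM(a) distribution. Then E[D(ξ)] = −2 + (∑_{i=1}^k i·a_i + k + 2)/(1 + b), where D(ξ) = −2 + ∑_{i=1}^∞ i·ξ_i. Moreover E[D(ξ)] = 0 when ξ has the standard GEM distribution. -/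
/-!
By independence, `E[ξ_i] = E[ζ_i] ∏_{j<i} (1 - E[ζ_j])` is the stick-breaking transform of the
means. A `Beta(m, n)` variable has mean `m / (m + n)`, so with `T_i = 1 + a_i + ⋯ + a_k` the
products telescope: `E[ξ_i] = a_i / T_1` for `i ≤ k`, and, the uniform law being `Beta(1, 1)`,
`E[ξ_{k+m}] = 2^{-m} / T_1` afterwards. The terms are nonnegative, so expectation and series
commute, and `∑_{m ≥ 1} (k + m) 2^{-m} = k + 2` gives the formula. The standard GEM is the case
`k = 0`.
-/

open MeasureTheory ProbabilityTheory

open Finset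
open scoped Nat

theorem setIntegral_Ioo_pow_mul_one_sub_pow (p q : ℕ) :
    ∫ x in Set.Ioo (0 : ℝ) 1, x ^ p * (1 - x) ^ q = (p ! * q ! : ℝ) / (p + q + 1)! := by
  have hB : Complex.betaIntegral (p + 1) (q + 1) =
      ((∫ x in (0 : ℝ)..1, x ^ p * (1 - x) ^ q : ℝ) : ℂ) := by
    rw [Complex.betaIntegral, ← intervalIntegral.integral_ofReal]
    refine intervalIntegral.integral_congr fun x _ => ?_
    push_cast
    rw [add_sub_cancel_right, add_sub_cancel_right, Complex.cpow_natCast, Complex.cpow_natCast]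
  have h := Complex.Gamma_mul_Gamma_eq_betaIntegral (s := (p : ℂ) + 1) (t := (q : ℂ) + 1)
    (by simp; positivity) (by simp; positivity)
  rw [hB, show (p : ℂ) + 1 + (q + 1) = ((p + q + 1 : ℕ) : ℂ) + 1 by push_cast; ring,
    Complex.Gamma_nat_eq_factorial, Complex.Gamma_nat_eq_factorial,
    Complex.Gamma_nat_eq_factorial] at h
  rw [← integral_Ioc_eq_integral_Ioo, ← intervalIntegral.integral_of_le zero_le_one,
    eq_div_iff (by positivity), mul_comm]
  exact_mod_cast h.symm

theorem betaMeasure_one_one : _root_.betaMeasure 1 1 = unifMeasure := by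
  simp [_root_.betaMeasure, one_add_one_eq_two]

theorem integral_betaMeasure_natCast_add_one (p q : ℕ) (g : ℝ → ℝ) :
    ∫ x, g x ∂_root_.betaMeasure (p + 1) (q + 1) =
      (p + q + 1)! / (p ! * q ! : ℝ) * ∫ x in Set.Ioo (0 : ℝ) 1, x ^ p * (1 - x) ^ q * g x := by
  have hdensity : ∀ x : ℝ, x ^ ((p : ℝ) + 1 - 1) * (1 - x) ^ ((q : ℝ) + 1 - 1) *
      (Real.Gamma (p + 1 + (q + 1)) / (Real.Gamma (p + 1) * Real.Gamma (q + 1))) =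
      (p + q + 1)! / (p ! * q ! : ℝ) * (x ^ p * (1 - x) ^ q) := by
    intro x
    rw [show (p : ℝ) + 1 + (q + 1) = ((p + q + 1 : ℕ) : ℝ) + 1 by push_cast; ring,
      Real.Gamma_nat_eq_factorial, Real.Gamma_nat_eq_factorial, Real.Gamma_nat_eq_factorial,
      add_sub_cancel_right, add_sub_cancel_right, Real.rpow_natCast, Real.rpow_natCast]
    ring
  set c : ℝ := (p + q + 1)! / (p ! * q ! : ℝ)
  have hmeasure : _root_.betaMeasure (p + 1) (q + 1) =
      unifMeasure.withDensity fun x => ENNReal.ofReal (c * (x ^ p * (1 - x) ^ q)) := by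
    simp only [_root_.betaMeasure, hdensity, c]
  rw [hmeasure, integral_withDensity_eq_integral_toReal_smul₀ (by fun_prop)
    (.of_forall fun _ => ENNReal.ofReal_lt_top), unifMeasure, ← integral_const_mul]
  refine setIntegral_congr_fun measurableSet_Ioo fun x hx => ?_
  have hx' : 0 ≤ c * (x ^ p * (1 - x) ^ q) :=
    mul_nonneg (by positivity) <|
      mul_nonneg (pow_nonneg hx.1.le p) (pow_nonneg (sub_nonneg.2 hx.2.le) q)
  rw [ENNReal.toReal_ofReal hx', smul_eq_mul]
  ring

theorem integral_id_betaMeasure {m n : ℕ} (hm : 0 < m) (hn : 0 < n) :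
    ∫ x, x ∂_root_.betaMeasure m n = m / (m + n) := by
  obtain ⟨p, rfl⟩ := Nat.exists_eq_add_one_of_ne_zero hm.ne'
  obtain ⟨q, rfl⟩ := Nat.exists_eq_add_one_of_ne_zero hn.ne'
  push_cast
  simp_rw [integral_betaMeasure_natCast_add_one, fun x : ℝ => show x ^ p * (1 - x) ^ q * x =
    x ^ (p + 1) * (1 - x) ^ q by ring, setIntegral_Ioo_pow_mul_one_sub_pow,
    show p + 1 + q + 1 = p + q + 1 + 1 by ring, Nat.factorial_succ (p + q + 1),
    Nat.factorial_succ p]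
  field_simp
  push_cast
  ring

def stickBreaking {R : Type*} [CommRing R] (s : ℕ → R) (i : ℕ) : R :=
  s i * ∏ j ∈ range i, (1 - s j)

theorem stickBreaking_mem_Icc {s : ℕ → ℝ} (hs : ∀ j, s j ∈ Set.Icc 0 1) (i : ℕ) :
    stickBreaking s i ∈ Set.Icc 0 1 := by
  have hprod : ∏ j ∈ range i, (1 - s j) ∈ Set.Icc 0 1 :=
    ⟨prod_nonneg fun j _ => sub_nonneg.2 (hs j).2,
      prod_le_one (fun j _ => sub_nonneg.2 (hs j).2) fun j _ => sub_le_self _ (hs j).1⟩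
  exact ⟨mul_nonneg (hs i).1 hprod.1, mul_le_one₀ (hs i).2 hprod.1 hprod.2⟩

theorem hasSum_add_mul_half_pow (c : ℝ) :
    HasSum (fun m : ℕ => (m + c) * (1 / 2) ^ (m + 1)) (c + 1) := by
  have hlin := (hasSum_coe_mul_geometric_of_norm_lt_one
    (show ‖(1 / 2 : ℝ)‖ < 1 by norm_num)).mul_left (1 / 2)
  have hconst := hasSum_geometric_two.mul_left (c / 2)
  rw [show (c + 1 : ℝ) = 1 / 2 * (1 / 2 / (1 - 1 / 2) ^ 2) + c / 2 * 2 by ring]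
  exact (hlin.add hconst).congr_fun fun m => by ring

section GEMMeans

variable (k : ℕ) (a : ℕ → ℕ)

/-- `gemTailMass k a i = 1 + a i + ⋯ + a (k - 1)`: for `i < k` the stick fraction `ζ i` of `GEM(a)`
is `Beta(a i, gemTailMass k a (i + 1))`, whose mean is `gemStickMean k a i`. -/
def gemTailMass (i : ℕ) : ℝ := 1 + ∑ j ∈ Ico i k, (a j : ℝ)

noncomputable def gemStickMean (i : ℕ) : ℝ := if i < k then a i / gemTailMass k a i else 1 / 2

theorem gemTailMass_pos (i : ℕ) : 0 < gemTailMass k a i := by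
  unfold gemTailMass; positivity

theorem gemTailMass_of_le {i : ℕ} (hi : k ≤ i) : gemTailMass k a i = 1 := by
  simp [gemTailMass, Ico_eq_empty_of_le hi]

theorem gemTailMass_of_lt {i : ℕ} (hi : i < k) :
    gemTailMass k a i = a i + gemTailMass k a (i + 1) := by
  rw [gemTailMass, gemTailMass, sum_eq_sum_Ico_succ_bot hi]
  ring

theorem one_sub_gemStickMean_of_lt {i : ℕ} (hi : i < k) :
    1 - gemStickMean k a i = gemTailMass k a (i + 1) / gemTailMass k a i := by
  have := (gemTailMass_pos k a i).ne'
  rw [gemStickMean, if_pos hi, eq_div_iff this, sub_mul, div_mul_cancel₀ _ this,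
    gemTailMass_of_lt k a hi]
  ring

theorem prod_one_sub_gemStickMean {i : ℕ} (hi : i ≤ k) :
    ∏ j ∈ range i, (1 - gemStickMean k a j) = gemTailMass k a i / gemTailMass k a 0 := by
  induction i with
  | zero => simp [(gemTailMass_pos k a 0).ne']
  | succ i ih =>
    rw [prod_range_succ, ih (by omega), one_sub_gemStickMean_of_lt k a (by omega), mul_comm,
      div_mul_div_cancel₀ (gemTailMass_pos k a i).ne']

theorem stickBreaking_gemStickMean_of_lt {i : ℕ} (hi : i < k) :
    stickBreaking (gemStickMean k a) i = a i / gemTailMass k a 0 := by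
  rw [stickBreaking, prod_one_sub_gemStickMean k a hi.le, gemStickMean, if_pos hi,
    div_mul_div_cancel₀ (gemTailMass_pos k a i).ne']

theorem stickBreaking_gemStickMean_add (m : ℕ) :
    stickBreaking (gemStickMean k a) (k + m) = (1 / 2) ^ (m + 1) / gemTailMass k a 0 := by
  have hhalf : ∀ j, gemStickMean k a (k + j) = 1 / 2 := fun j => if_neg (by omega)
  rw [stickBreaking, prod_range_add, prod_one_sub_gemStickMean k a le_rfl,
    gemTailMass_of_le k a le_rfl, hhalf]
  simp only [hhalf, prod_const, card_range]
  ring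

theorem hasSum_weighted_stickBreaking_gemStickMean :
    HasSum (fun i : ℕ => ((i : ℝ) + 1) * stickBreaking (gemStickMean k a) i)
      ((∑ i ∈ range k, ((i : ℝ) + 1) * a i + k + 2) / gemTailMass k a 0) := by
  have htail : HasSum
      (fun m : ℕ => (((m + k : ℕ) : ℝ) + 1) * stickBreaking (gemStickMean k a) (m + k))
      ((k + 1 + 1) / gemTailMass k a 0) := by
    have h := (hasSum_add_mul_half_pow ((k : ℝ) + 1)).div_const (gemTailMass k a 0)
    refine h.congr_fun fun m => ?_
    rw [add_comm m k, stickBreaking_gemStickMean_add]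
    push_cast
    ring
  convert htail.sum_range_add
    (f := fun i : ℕ => ((i : ℝ) + 1) * stickBreaking (gemStickMean k a) i) using 1
  have hhead : ∑ i ∈ range k, ((i : ℝ) + 1) * stickBreaking (gemStickMean k a) i =
      (∑ i ∈ range k, ((i : ℝ) + 1) * a i) / gemTailMass k a 0 := by
    rw [sum_div]
    exact sum_congr rfl fun i hi => by
      rw [stickBreaking_gemStickMean_of_lt k a (mem_range.1 hi), mul_div_assoc]
  rw [hhead, ← add_div]
  ring

end GEMMeans

theorem ae_mem_Ioo_betaMeasure (α β : ℝ) : ∀ᵐ x ∂_root_.betaMeasure α β, x ∈ Set.Ioo 0 1 :=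
  (withDensity_absolutelyContinuous _ _).ae_le (ae_restrict_mem measurableSet_Ioo)

section

variable {Ω : Type*} [MeasurableSpace Ω] {μ : Measure Ω}

theorem integral_stickBreaking {ζ : ℕ → Ω → ℝ} (hindep : iIndepFun ζ μ)
    (hint : ∀ i, Integrable (ζ i) μ) (i : ℕ) :
    ∫ ω, stickBreaking (ζ · ω) i ∂μ = stickBreaking (fun j => ∫ ω, ζ j ω ∂μ) i := by
  have := hindep.isProbabilityMeasure
  let f : Fin (i + 1) → ℝ → ℝ := Fin.lastCases id fun _ x => 1 - x
  have hf : ∀ g : ℕ → ℝ, stickBreaking g i = ∏ j : Fin (i + 1), f j (g j) := fun g => by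
    rw [Fin.prod_univ_castSucc, stickBreaking, mul_comm, ← Fin.prod_univ_eq_prod_range]
    simp [f]
  simp_rw [hf]
  rw [(hindep.precomp Fin.val_injective).integral_fun_prod_comp
    (fun j => (hint j).aemeasurable) fun j => ?_]
  · refine Fintype.prod_congr _ _ fun j => ?_
    cases j using Fin.lastCases with
    | last => simp [f]
    | cast j => simp [f, integral_sub (integrable_const 1) (hint j)]
  · cases j using Fin.lastCases with
    | last => simpa [f] using aestronglyMeasurable_id
    | cast j =>
      simpa [f] using (measurable_id.const_sub (1 : ℝ)).aestronglyMeasurable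

theorem integrable_tsum_of_nonneg {ι : Type*} [Countable ι] {F : ι → Ω → ℝ}
    (hF : ∀ i, Integrable (F i) μ) (hF0 : ∀ i, 0 ≤ᵐ[μ] F i)
    (hs : Summable fun i => ∫ ω, F i ω ∂μ) : Integrable (fun ω => ∑' i, F i ω) μ := by
  have hae : (fun ω => (∑' i, ENNReal.ofReal (F i ω)).toReal) =ᵐ[μ] fun ω => ∑' i, F i ω := by
    filter_upwards [ae_all_iff.2 hF0] with ω hω
    rw [ENNReal.tsum_toReal_eq fun _ => ENNReal.ofReal_ne_top]
    exact tsum_congr fun i => ENNReal.toReal_ofReal (hω i)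
  refine (integrable_toReal_of_lintegral_ne_top
    (AEMeasurable.tsum fun i => (hF i).aemeasurable.ennreal_ofReal) ?_).congr hae
  rw [lintegral_tsum fun i => (hF i).aemeasurable.ennreal_ofReal]
  simp_rw [← ofReal_integral_eq_lintegral_ofReal (hF _) (hF0 _)]
  rw [← ENNReal.ofReal_tsum_of_nonneg (fun i => integral_nonneg_of_ae (hF0 i)) hs]
  exact ENNReal.ofReal_ne_top

theorem integral_tsum_of_nonneg {ι : Type*} [Countable ι] {F : ι → Ω → ℝ} {s : ℝ}
    (hF : ∀ i, Integrable (F i) μ) (hF0 : ∀ i, 0 ≤ᵐ[μ] F i)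
    (hs : HasSum (fun i => ∫ ω, F i ω ∂μ) s) : ∫ ω, ∑' i, F i ω ∂μ = s := by
  have hnorm : ∀ i, ∫ ω, ‖F i ω‖ ∂μ = ∫ ω, F i ω ∂μ := fun i =>
    integral_congr_ae <| (hF0 i).mono fun ω hω => Real.norm_of_nonneg hω
  rw [← integral_tsum_of_summable_integral_norm hF (by simpa only [hnorm] using hs.summable),
    hs.tsum_eq]

theorem integrable_and_integral_tsum_mul_stickBreaking {ζ : ℕ → Ω → ℝ}
    (hmeas : ∀ i, Measurable (ζ i)) (hindep : iIndepFun ζ μ)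
    (hmem : ∀ᵐ ω ∂μ, ∀ i, ζ i ω ∈ Set.Icc 0 1) {s w : ℕ → ℝ}
    (hmean : ∀ i, ∫ ω, ζ i ω ∂μ = s i) (hw : ∀ i, 0 ≤ w i) {v : ℝ}
    (hv : HasSum (fun i => w i * stickBreaking s i) v) :
    Integrable (fun ω => ∑' i, w i * stickBreaking (ζ · ω) i) μ ∧
      ∫ ω, ∑' i, w i * stickBreaking (ζ · ω) i ∂μ = v := by
  have := hindep.isProbabilityMeasure
  have hbound : ∀ {X : Ω → ℝ}, Measurable X → (∀ᵐ ω ∂μ, X ω ∈ Set.Icc 0 1) → Integrable X μ :=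
    fun hX hX01 => .of_bound hX.aestronglyMeasurable 1 <|
      hX01.mono fun ω h => (Real.norm_of_nonneg h.1).trans_le h.2
  have hint : ∀ i, Integrable (fun ω => w i * stickBreaking (ζ · ω) i) μ := fun i =>
    (hbound (by unfold stickBreaking; fun_prop)
      (hmem.mono fun ω h => stickBreaking_mem_Icc h i)).const_mul _
  have hnonneg : ∀ i, 0 ≤ᵐ[μ] fun ω => w i * stickBreaking (ζ · ω) i := fun i =>
    hmem.mono fun ω h => mul_nonneg (hw i) (stickBreaking_mem_Icc h i).1
  have hsum : HasSum (fun i => ∫ ω, w i * stickBreaking (ζ · ω) i ∂μ) v := by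
    refine hv.congr_fun fun i => ?_
    rw [integral_const_mul, integral_stickBreaking hindep
      fun j => hbound (hmeas j) (hmem.mono fun ω h => h j), funext hmean]
  exact ⟨integrable_tsum_of_nonneg hint hnonneg hsum.summable,
    integral_tsum_of_nonneg hint hnonneg hsum⟩

theorem exists_map_eq_betaMeasure_of_gem (k : ℕ) (a : ℕ → ℕ) (ha : ∀ i < k, 0 < a i)
    {ζ : ℕ → Ω → ℝ}
    (hζlaw : ∀ i < k, Measure.map (ζ i) μ =
      _root_.betaMeasure (a i) (1 + ∑ j ∈ Finset.Ico (i + 1) k, (a j : ℝ)))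
    (hζlaw' : ∀ i, k ≤ i → Measure.map (ζ i) μ = unifMeasure) (i : ℕ) :
    ∃ m n : ℕ, 0 < m ∧ 0 < n ∧ μ.map (ζ i) = _root_.betaMeasure m n ∧
      (m : ℝ) / (m + n) = gemStickMean k a i := by
  rcases lt_or_ge i k with hi | hi
  · refine ⟨a i, 1 + ∑ j ∈ Ico (i + 1) k, a j, ha i hi, by positivity, ?_, ?_⟩
    · rw [hζlaw i hi]
      push_cast
      rfl
    · rw [gemStickMean, if_pos hi, gemTailMass_of_lt k a hi, gemTailMass]
      push_cast
      rfl
  · refine ⟨1, 1, one_pos, one_pos, ?_, ?_⟩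
    · rw [hζlaw' i hi, Nat.cast_one, betaMeasure_one_one]
    · rw [gemStickMean, if_neg (not_lt.2 hi)]
      norm_num

theorem integral_D_of_gem (μ : Measure Ω) (k : ℕ) (a : ℕ → ℕ) (ha : ∀ i < k, 0 < a i)
    (ζ : ℕ → Ω → ℝ) (hζmeas : ∀ i, Measurable (ζ i)) (hζindep : iIndepFun ζ μ)
    (hζlaw : ∀ i < k, Measure.map (ζ i) μ =
      _root_.betaMeasure (a i) (1 + ∑ j ∈ Finset.Ico (i + 1) k, (a j : ℝ)))
    (hζlaw' : ∀ i, k ≤ i → Measure.map (ζ i) μ = unifMeasure)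
    (ξ : ℕ → Ω → ℝ) (hξ : ∀ i ω, ξ i ω = ζ i ω * ∏ j ∈ Finset.range i, (1 - ζ j ω)) :
    ∫ ω, (-2 + ∑' i : ℕ, ((i : ℝ) + 1) * ξ i ω) ∂μ =
      -2 + ((∑ i ∈ Finset.range k, ((i : ℝ) + 1) * a i) + k + 2) /
            (1 + ∑ i ∈ Finset.range k, (a i : ℝ)) := by
  have := hζindep.isProbabilityMeasure
  have hlaw := exists_map_eq_betaMeasure_of_gem k a ha hζlaw hζlaw'
  have hmem : ∀ᵐ ω ∂μ, ∀ i, ζ i ω ∈ Set.Icc 0 1 := ae_all_iff.2 fun i => by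
    obtain ⟨m, n, -, -, hmap, -⟩ := hlaw i
    exact ((ae_map_iff (hζmeas i).aemeasurable measurableSet_Ioo).1
      (hmap ▸ ae_mem_Ioo_betaMeasure _ _)).mono fun _ => Set.mem_Icc_of_Ioo
  have hmean : ∀ i, ∫ ω, ζ i ω ∂μ = gemStickMean k a i := fun i => by
    obtain ⟨m, n, hm, hn, hmap, hmn⟩ := hlaw i
    rw [← hmn, ← integral_id_betaMeasure hm hn, ← hmap]
    exact (integral_map (hζmeas i).aemeasurable aestronglyMeasurable_id).symm
  obtain ⟨hint, hintegral⟩ := integrable_and_integral_tsum_mul_stickBreaking hζmeas hζindep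
    hmem hmean (fun i => by positivity) (hasSum_weighted_stickBreaking_gemStickMean k a)
  obtain rfl : ξ = fun i ω => stickBreaking (ζ · ω) i := funext₂ hξ
  rw [integral_add (integrable_const _) hint, hintegral, integral_const, gemTailMass,
    range_eq_Ico]
  simp

end

/-- Indices are 0-based: `ξ i` is the paper's `ξ_{i+1}`, whence the weight `i + 1`. -/
theorem gem_D_expectation_general
    {Ω : Type*} [MeasurableSpace Ω] (μ : Measure Ω)
    (k : ℕ) (a : ℕ → ℕ) (ha : ∀ i < k, 0 < a i)
    (ζ : ℕ → Ω → ℝ) (hζmeas : ∀ i, Measurable (ζ i))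
    (hζindep : iIndepFun ζ μ)
    (hζlaw : ∀ i < k, Measure.map (ζ i) μ =
      _root_.betaMeasure (a i) (1 + ∑ j ∈ Finset.Ico (i + 1) k, (a j : ℝ)))
    (hζlaw' : ∀ i, k ≤ i → Measure.map (ζ i) μ = unifMeasure)
    (ξ : ℕ → Ω → ℝ)
    (hξ : ∀ i ω, ξ i ω = ζ i ω * ∏ j ∈ Finset.range i, (1 - ζ j ω))
    (ζ' : ℕ → Ω → ℝ) (hζ'meas : ∀ i, Measurable (ζ' i))
    (hζ'indep : iIndepFun ζ' μ)
    (hζ'law : ∀ i, Measure.map (ζ' i) μ = unifMeasure)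
    (ξ' : ℕ → Ω → ℝ)
    (hξ' : ∀ i ω, ξ' i ω = ζ' i ω * ∏ j ∈ Finset.range i, (1 - ζ' j ω)) :
    (∫ ω, (-2 + ∑' i : ℕ, ((i : ℝ) + 1) * ξ i ω) ∂μ =
      -2 + ((∑ i ∈ Finset.range k, ((i : ℝ) + 1) * a i) + k + 2) /
            (1 + ∑ i ∈ Finset.range k, (a i : ℝ))) ∧
    ∫ ω, (-2 + ∑' i : ℕ, ((i : ℝ) + 1) * ξ' i ω) ∂μ = 0 := by
  refine ⟨integral_D_of_gem μ k a ha ζ hζmeas hζindep hζlaw hζlaw' ξ hξ, ?_⟩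
  have h := integral_D_of_gem μ 0 a (fun _ hi => absurd hi (Nat.not_lt_zero _)) ζ' hζ'meas
    hζ'indep (fun _ hi => absurd hi (Nat.not_lt_zero _)) (fun i _ => hζ'law i) ξ' hξ'
  norm_num [h]

/-- For `ξ ~ GEM(a)` with `a = (a 0, …, a (k-1))` nonempty and
`b = ∑ a_i`, one has `E[D(ξ)] = -2 + (∑ i·a_i + k + 2)/(1 + b)` where
`D(ξ) = -2 + ∑ i·ξ_i` (0-indexed: `ξ i` is `ξ_{i+1}` and gets weight `i+1`).
Moreover for a standard GEM sequence `ξ'` (all `ζ' i` uniform), `E[D(ξ')] = 0`. -/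
theorem gem_D_expectation
    {Ω : Type*} [MeasurableSpace Ω] (μ : Measure Ω) [IsProbabilityMeasure μ]
    (k : ℕ) (hk : 0 < k) (a : ℕ → ℕ) (ha : ∀ i < k, 0 < a i)
    (ζ : ℕ → Ω → ℝ) (hζmeas : ∀ i, Measurable (ζ i))
    (hζindep : iIndepFun ζ μ)
    (hζlaw : ∀ i < k, Measure.map (ζ i) μ =
      _root_.betaMeasure (a i) (1 + ∑ j ∈ Finset.Ico (i + 1) k, (a j : ℝ)))
    (hζlaw' : ∀ i, k ≤ i → Measure.map (ζ i) μ = unifMeasure)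
    (ξ : ℕ → Ω → ℝ)
    (hξ : ∀ i ω, ξ i ω = ζ i ω * ∏ j ∈ Finset.range i, (1 - ζ j ω))
    (ζ' : ℕ → Ω → ℝ) (hζ'meas : ∀ i, Measurable (ζ' i))
    (hζ'indep : iIndepFun ζ' μ)
    (hζ'law : ∀ i, Measure.map (ζ' i) μ = unifMeasure)
    (ξ' : ℕ → Ω → ℝ)
    (hξ' : ∀ i ω, ξ' i ω = ζ' i ω * ∏ j ∈ Finset.range i, (1 - ζ' j ω)) :
    (∫ ω, (-2 + ∑' i : ℕ, ((i : ℝ) + 1) * ξ i ω) ∂μ =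
      -2 + ((∑ i ∈ Finset.range k, ((i : ℝ) + 1) * a i) + k + 2) /
            (1 + ∑ i ∈ Finset.range k, (a i : ℝ))) ∧
    ∫ ω, (-2 + ∑' i : ℕ, ((i : ℝ) + 1) * ξ' i ω) ∂μ = 0 :=
  gem_D_expectation_general μ k a ha ζ hζmeas hζindep hζlaw hζlaw' ξ hξ ζ' hζ'meas hζ'indep hζ'law
    ξ' hξ'
end

section
/- For every n ≥ 1, the expected total path length of the random recursive tree with n nodes satisfies E[TPL_n] = n·H_n − n. -/
open MeasureTheory ProbabilityTheory

/-- The `n`-th harmonic number `H_n = ∑_{k=1}^n 1/k`. -/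
noncomputable def harm (n : ℕ) : ℝ := ∑ k ∈ Finset.range n, (1 : ℝ) / (k + 1)

/-!
Node `m + 2` picks its parent uniformly among `1, …, m + 1`, independently of the earlier
parents, and these determine the depths of nodes `1, …, m + 1`. Hence the mean depths
`e n = E[D n]` satisfy `e 1 = 0` and `e (m + 2) = 1 + (e 1 + ⋯ + e (m + 1)) / (m + 1)`,
whose solution is `e n = H_{n-1}`, and `∑_{k ≤ n} H_{k-1} = n H_n - n`.
The recursion for `D` determines it only where every parent is in range; that holds almost
surely, and there `D` agrees with `RecursiveTree.depth` of the parent sequence, which is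
visibly a function of the earlier parents and so inherits their independence of the next one.
-/

open Finset

lemma harm_succ (n : ℕ) : harm (n + 1) = harm n + 1 / (n + 1) := by
  simp [harm, sum_range_succ]

lemma sum_Icc_harm_pred (n : ℕ) : ∑ j ∈ Icc 1 n, harm (j - 1) = n * harm n - n := by
  induction n with
  | zero => simp [harm]
  | succ n ih =>
    rw [sum_Icc_succ_top (by omega), ih, Nat.add_sub_cancel, harm_succ]
    push_cast
    field_simp
    ring

lemma eq_harm_pred_of_recursion (e : ℕ → ℝ) (h1 : e 1 = 0)
    (hrec : ∀ m : ℕ, e (m + 2) = (∑ j ∈ Icc 1 (m + 1), (e j + 1)) / (m + 1)) :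
    ∀ n, 1 ≤ n → e n = harm (n - 1) := by
  intro n
  induction n using Nat.strong_induction_on with
  | _ n ih =>
    intro hn
    match n with
    | 1 => simp [h1, harm]
    | m + 2 =>
      have hsum : ∑ j ∈ Icc 1 (m + 1), (e j + 1) = ∑ j ∈ Icc 1 (m + 1), (harm (j - 1) + 1) :=
        sum_congr rfl fun j hj => by rw [ih j (by grind) (mem_Icc.mp hj).1]
      rw [hrec, hsum, sum_add_distrib, sum_Icc_harm_pred]
      simp only [sum_const, Nat.card_Icc, Nat.add_sub_cancel, nsmul_eq_mul, mul_one]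
      push_cast
      field_simp
      ring

lemma ProbabilityTheory.IndepFun.setIntegral_preimage_eq_mul {Ω β : Type*} [MeasurableSpace Ω]
    [MeasurableSpace β] {μ : Measure Ω} {X : Ω → ℝ} {Y : Ω → β} (hXY : IndepFun X Y μ)
    (hX : AEMeasurable X μ) (hY : Measurable Y) {t : Set β} (ht : MeasurableSet t) :
    ∫ ω in Y ⁻¹' t, X ω ∂μ = μ.real (Y ⁻¹' t) * ∫ ω, X ω ∂μ :=
  Indep.setIntegral_eq_mul (f := id) hY.comap_le ((IndepFun_iff_Indep Y X μ).mp hXY.symm) hX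
    ⟨t, ht, rfl⟩ aestronglyMeasurable_id

lemma ae_mem_of_measure_preimage_singleton_eq_zero {Ω β : Type*} [MeasurableSpace Ω]
    [Countable β] {μ : Measure Ω} {Y : Ω → β} {s : Set β} (h : ∀ b ∉ s, μ (Y ⁻¹' {b}) = 0) :
    ∀ᵐ ω ∂μ, Y ω ∈ s := by
  have hbad : {ω | Y ω ∉ s} = ⋃ b ∈ sᶜ, Y ⁻¹' {b} := by ext; simp
  rw [ae_iff, hbad, measure_biUnion_null_iff (Set.to_countable _)]
  exact h

namespace RecursiveTree

/-- Node `m + 2` is attached to node `x m`. A parent outside `{1, …, m + 1}` (a null event in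
the random setting) is cut off with depth `0`, so that `depth x n` is total and depends only on
`x 0, …, x (n - 2)`. -/
def depth (x : ℕ → ℕ) : ℕ → ℕ
  | 0 => 0
  | 1 => 0
  | m + 2 => if h : x m ∈ Icc 1 (m + 1) then depth x (x m) + 1 else 0
decreasing_by simp only [mem_Icc] at h; omega

lemma depth_add_two (x : ℕ → ℕ) (m : ℕ) :
    depth x (m + 2) = if x m ∈ Icc 1 (m + 1) then depth x (x m) + 1 else 0 := by
  rw [depth, dite_eq_ite]

lemma depth_le (x : ℕ → ℕ) (n : ℕ) : depth x n ≤ n := by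
  induction n using Nat.strong_induction_on with
  | _ n ih =>
    match n with
    | 0 | 1 => simp [depth]
    | m + 2 =>
      rw [depth_add_two]
      split_ifs with h
      · have := ih (x m) (by grind)
        grind
      · omega

lemma depth_congr {x y : ℕ → ℕ} {k : ℕ} (hxy : ∀ i < k, x i = y i) :
    ∀ n, n ≤ k + 1 → depth x n = depth y n := by
  intro n
  induction n using Nat.strong_induction_on with
  | _ n ih =>
    intro hn
    match n with
    | 0 | 1 => simp [depth]
    | m + 2 =>
      rw [depth_add_two, depth_add_two, hxy m (by omega)]
      split_ifs with h
      · rw [ih (y m) (by grind) (by grind)]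
      · rfl

lemma cast_depth_add_two (x : ℕ → ℕ) (m : ℕ) :
    (depth x (m + 2) : ℝ) = ∑ j ∈ Icc 1 (m + 1), if x m = j then (depth x j : ℝ) + 1 else 0 := by
  rw [sum_ite_eq, depth_add_two]
  split_ifs <;> simp

lemma eq_depth {x d : ℕ → ℕ} (hx : ∀ k, x k ∈ Icc 1 (k + 1)) (hd1 : d 1 = 0)
    (hd : ∀ k, d (k + 2) = d (x k) + 1) : ∀ n, 1 ≤ n → d n = depth x n := by
  intro n
  induction n using Nat.strong_induction_on with
  | _ n ih =>
    intro hn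
    match n with
    | 1 => simp [hd1, depth]
    | m + 2 =>
      have hxm := mem_Icc.mp (hx m)
      rw [hd, depth_add_two, if_pos (hx m), ih (x m) (by omega) hxm.1]

section Random

variable {Ω : Type*} {J : ℕ → Ω → ℕ}

lemma depth_eq_comp_prefix (J : ℕ → Ω → ℕ) {k n : ℕ} (hn : n ≤ k + 1) :
    (fun ω => depth (J · ω) n) =
      (fun z : range k → ℕ => depth (fun i => if h : i ∈ range k then z ⟨i, h⟩ else 0) n) ∘
        fun ω (i : range k) => J i ω := by
  funext ω
  exact depth_congr (fun i hi => by simp [hi]) n hn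

variable [MeasurableSpace Ω] {μ : Measure Ω}

lemma measurable_depth (hJ : ∀ k, Measurable (J k)) (n : ℕ) :
    Measurable fun ω => depth (J · ω) n := by
  rw [depth_eq_comp_prefix J (k := n) (by omega)]
  exact (measurable_of_countable _).comp (measurable_pi_lambda _ fun i => hJ i)

lemma integrable_depth [IsFiniteMeasure μ] (hJ : ∀ k, Measurable (J k)) (n : ℕ) :
    Integrable (fun ω => (depth (J · ω) n : ℝ)) μ :=
  .of_bound (measurable_from_nat.comp (measurable_depth hJ n)).aestronglyMeasurable n
    (ae_of_all _ fun ω => by simpa using depth_le _ n)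

lemma indepFun_depth (hJ : ∀ k, Measurable (J k)) (hindep : iIndepFun J μ) {j k : ℕ}
    (hj : j ≤ k + 1) : IndepFun (fun ω => depth (J · ω) j) (J k) μ := by
  rw [depth_eq_comp_prefix J hj]
  exact (hindep.indepFun_finset (range k) {k} (by simp) hJ).comp (measurable_of_countable _)
    (measurable_of_countable fun z : ({k} : Finset ℕ) → ℕ => z ⟨k, mem_singleton_self k⟩)

lemma integral_depth_add_two [IsProbabilityMeasure μ] (hJ : ∀ k, Measurable (J k))
    (hindep : iIndepFun J μ)
    (hlaw : ∀ k, ∀ j ∈ Icc 1 (k + 1), μ.real (J k ⁻¹' {j}) = ((k : ℝ) + 1)⁻¹) (m : ℕ) :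
    ∫ ω, (depth (J · ω) (m + 2) : ℝ) ∂μ =
      (∑ j ∈ Icc 1 (m + 1), (∫ ω, (depth (J · ω) j : ℝ) ∂μ + 1)) / (m + 1) := by
  have hfiber : ∀ j, MeasurableSet (J m ⁻¹' {j}) := fun j => hJ m (measurableSet_singleton j)
  have hterm : ∀ j ∈ Icc 1 (m + 1), ∫ ω in J m ⁻¹' {j}, ((depth (J · ω) j : ℝ) + 1) ∂μ =
      (∫ ω, (depth (J · ω) j : ℝ) ∂μ + 1) / (m + 1) := by
    intro j hj
    have hindep' : IndepFun (fun ω => (depth (J · ω) j : ℝ) + 1) (J m) μ :=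
      (indepFun_depth hJ hindep (mem_Icc.mp hj).2).comp (φ := fun d : ℕ => (d : ℝ) + 1)
        (measurable_of_countable _) measurable_id
    have hX : Measurable fun ω => (depth (J · ω) j : ℝ) + 1 :=
      (measurable_from_nat.comp (measurable_depth hJ j)).add_const 1
    rw [hindep'.setIntegral_preimage_eq_mul hX.aemeasurable (hJ m) (measurableSet_singleton j),
      hlaw m j hj, integral_add (integrable_depth hJ j) (integrable_const 1), integral_const,
      probReal_univ, one_smul, inv_mul_eq_div]
  calc ∫ ω, (depth (J · ω) (m + 2) : ℝ) ∂μ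
      = ∫ ω, ∑ j ∈ Icc 1 (m + 1),
          (J m ⁻¹' {j}).indicator (fun ω => (depth (J · ω) j : ℝ) + 1) ω ∂μ := by
        congr with ω
        rw [cast_depth_add_two]
        simp only [Set.indicator, Set.mem_preimage, Set.mem_singleton_iff]
    _ = ∑ j ∈ Icc 1 (m + 1), ∫ ω in J m ⁻¹' {j}, ((depth (J · ω) j : ℝ) + 1) ∂μ := by
        have hint : ∀ j, Integrable (fun ω => (J m ⁻¹' {j}).indicator
            (fun ω => (depth (J · ω) j : ℝ) + 1) ω) μ := fun j =>
          ((integrable_depth hJ j).add (integrable_const 1)).indicator (hfiber j)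
        rw [integral_finsetSum _ fun j _ => hint j]
        simp only [integral_indicator (hfiber _)]
    _ = _ := by rw [sum_div]; exact sum_congr rfl hterm

end Random

end RecursiveTree

open RecursiveTree

/-- Here `J k` is the paper's `J_{k+1}`: node `k + 2` is attached to node `J k`. -/
theorem rrt_expected_total_path_length_general
    {Ω : Type*} [MeasurableSpace Ω] (μ : Measure Ω) [IsProbabilityMeasure μ]
    (J : ℕ → Ω → ℕ) (hJmeas : ∀ k, Measurable (J k))
    (hJindep : iIndepFun J μ)
    (hJlaw : ∀ k j, μ {ω | J k ω = j} =
      if j ∈ Finset.Icc 1 (k + 1) then ((k : ENNReal) + 1)⁻¹ else 0)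
    (D : ℕ → Ω → ℕ)
    (hD1 : ∀ ω, D 1 ω = 0)
    (hD : ∀ k ω, D (k + 2) ω = D (J k ω) ω + 1) :
    ∀ n : ℕ, 1 ≤ n →
      ∫ ω, (∑ k ∈ Finset.Icc 1 n, (D k ω : ℝ)) ∂μ = n * harm n - n := by
  have hlaw : ∀ k, ∀ j ∈ Icc 1 (k + 1), μ.real (J k ⁻¹' {j}) = ((k : ℝ) + 1)⁻¹ := by
    intro k j hj
    simp only [measureReal_def, Set.preimage, Set.mem_singleton_iff, hJlaw, if_pos hj,
      ENNReal.toReal_inv]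
    norm_cast
  have hD_eq_depth : ∀ᵐ ω ∂μ, ∀ n, 1 ≤ n → D n ω = depth (J · ω) n := by
    have hparent : ∀ᵐ ω ∂μ, ∀ k, J k ω ∈ Icc 1 (k + 1) := ae_all_iff.mpr fun k =>
      ae_mem_of_measure_preimage_singleton_eq_zero fun j hj => by
        simp only [Set.preimage, Set.mem_singleton_iff, hJlaw, if_neg (by exact_mod_cast hj)]
    filter_upwards [hparent] with ω hω using eq_depth hω (hD1 ω) (hD · ω)
  have hmean : ∀ n, 1 ≤ n → ∫ ω, (depth (J · ω) n : ℝ) ∂μ = harm (n - 1) :=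
    eq_harm_pred_of_recursion _ (by simp [depth]) (integral_depth_add_two hJmeas hJindep hlaw)
  intro n hn
  calc ∫ ω, (∑ k ∈ Icc 1 n, (D k ω : ℝ)) ∂μ
      = ∫ ω, (∑ k ∈ Icc 1 n, (depth (J · ω) k : ℝ)) ∂μ := by
        refine integral_congr_ae (hD_eq_depth.mono fun ω hω => ?_)
        exact sum_congr rfl fun k hk => by rw [hω k (mem_Icc.mp hk).1]
    _ = ∑ k ∈ Icc 1 n, harm (k - 1) := by
        rw [integral_finsetSum _ fun k _ => integrable_depth hJmeas k]
        exact sum_congr rfl fun k hk => hmean k (mem_Icc.mp hk).1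
    _ = n * harm n - n := sum_Icc_harm_pred n

/-- In the random recursive tree chain (node `k+1` attached to `J_k`,
uniform on `{1,…,k}`; here `J k` stands for the paper's `J_{k+1}`, uniform on `{1,…,k+1}`),
with depths `D 1 = 0`, `D (k+2) = D (J k) + 1` and total path length
`TPL_n = ∑_{k=1}^n D k`, one has `E[TPL_n] = n·H_n − n` for every `n ≥ 1`. -/
theorem rrt_expected_total_path_length
    {Ω : Type*} [MeasurableSpace Ω] (μ : Measure Ω) [IsProbabilityMeasure μ]
    (J : ℕ → Ω → ℕ) (hJmeas : ∀ k, Measurable (J k))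
    (hJindep : iIndepFun J μ)
    (hJlaw : ∀ k j, μ {ω | J k ω = j} =
      if j ∈ Finset.Icc 1 (k + 1) then ((k : ENNReal) + 1)⁻¹ else 0)
    (D : ℕ → Ω → ℕ) (hDmeas : ∀ n, Measurable (D n))
    (hD1 : ∀ ω, D 1 ω = 0)
    (hD : ∀ k ω, D (k + 2) ω = D (J k ω) ω + 1) :
    ∀ n : ℕ, 1 ≤ n →
      ∫ ω, (∑ k ∈ Finset.Icc 1 n, (D k ω : ℝ)) ∂μ = n * harm n - n :=
  rrt_expected_total_path_length_general μ J hJmeas hJindep hJlaw D hD1 hD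
end

section
/- Let x be a Harris tree with n = #x nodes. Then ∑_{(u,v)∈x×x} |u∧v| = ∑_{u∈x} (#x(u))² − n², where u∧v denotes the longest common prefix of u and v, and consequently the Wiener index WI(x) := (1/2)∑_{(u,v)∈x×x}(|u| + |v| − 2|u∧v|) satisfies WI(x) = n·TPL(x) + n² − ∑_{u∈x} (#x(u))², where TPL(x) = ∑_{u∈x} |u|. -/
/-!
Every pair `(u, v)` of nodes has exactly `|u ∧ v| + 1` common ancestors in a prefix-closed set
`x`, namely the prefixes of `u ∧ v`. Counting the triples `(w, u, v)` with `w` a common prefix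
of `u` and `v` in two ways therefore gives `∑_{u,v} (|u ∧ v| + 1) = ∑_w #x(w)²`. The Wiener
index formula is this identity combined with `∑_{u,v} (|u| + |v|) = 2 n TPL(x)`.
-/

/-- The longest common prefix of two lists. -/
def lcp : List ℕ+ → List ℕ+ → List ℕ+
  | a :: as, b :: bs => if a = b then a :: lcp as bs else []
  | _, _ => []

open Finset

theorem prefix_lcp_iff {w : List ℕ+} : ∀ {u v : List ℕ+}, w <+: lcp u v ↔ w <+: u ∧ w <+: v
  | [], _ => by simp +contextual [lcp]
  | _ :: _, [] => by simp +contextual [lcp]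
  | a :: as, b :: bs => by
    rcases w with _ | ⟨c, cs⟩
    · simp
    · by_cases hab : a = b
      · subst hab
        simp only [lcp, if_pos, List.cons_prefix_cons, prefix_lcp_iff]
        tauto
      · simp only [lcp, hab, if_false, List.cons_prefix_cons]
        grind

theorem List.nodup_inits {α : Type*} : ∀ l : List α, l.inits.Nodup
  | [] => by simp
  | a :: l => by
    rw [List.inits_cons]
    exact ((nodup_inits l).map List.cons_injective).cons (by simp)

def IsPrefixClosed {α : Type*} (s : Finset (List α)) : Prop :=
  ∀ u w : List α, u <+: w → w ∈ s → u ∈ s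

theorem card_filter_isPrefix_eq_length_add_one {α : Type*} [DecidableEq α] {s : Finset (List α)} {l : List α}
    (hs : ∀ w, w <+: l → w ∈ s) : #(s.filter (· <+: l)) = l.length + 1 := by
  have : s.filter (· <+: l) = l.inits.toFinset := by
    ext w
    simp only [mem_filter, List.mem_toFinset, List.mem_inits]
    exact ⟨And.right, fun h => ⟨hs w h, h⟩⟩
  rw [this, List.toFinset_card_of_nodup (List.nodup_inits l), List.length_inits]

theorem sum_sum_card_filter_and {α β : Type*} (s : Finset α) (t : Finset β) (r : β → α → Prop)
    [DecidableRel r] :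
    ∑ u ∈ s, ∑ v ∈ s, #(t.filter fun w => r w u ∧ r w v) = ∑ w ∈ t, #(s.filter (r w)) ^ 2 := by
  simp only [card_filter, sq, sum_mul_sum, ite_zero_mul_ite_zero, mul_one]
  exact (sum_congr rfl fun _ _ => sum_comm).trans sum_comm

theorem sum_sum_lcp_length_add_card_sq {x : Finset (List ℕ+)} (hx : IsPrefixClosed x) :
    ∑ u ∈ x, ∑ v ∈ x, (lcp u v).length + #x ^ 2 = ∑ u ∈ x, #(x.filter fun v => u <+: v) ^ 2 := by
  have common_prefixes : ∀ u ∈ x, ∀ v ∈ x,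
      (lcp u v).length + 1 = #(x.filter fun w => w <+: u ∧ w <+: v) := fun u hu v _ => by
    rw [← card_filter_isPrefix_eq_length_add_one fun w hw => hx w u (prefix_lcp_iff.mp hw).1 hu]
    exact congrArg card (filter_congr fun w _ => prefix_lcp_iff)
  calc ∑ u ∈ x, ∑ v ∈ x, (lcp u v).length + #x ^ 2
      = ∑ u ∈ x, ∑ v ∈ x, ((lcp u v).length + 1) := by
        simp only [sum_add_distrib, sum_const, smul_eq_mul, mul_one, sq]
    _ = ∑ u ∈ x, ∑ v ∈ x, #(x.filter fun w => w <+: u ∧ w <+: v) :=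
        sum_congr rfl fun u hu => sum_congr rfl (common_prefixes u hu)
    _ = ∑ u ∈ x, #(x.filter fun v => u <+: v) ^ 2 :=
        sum_sum_card_filter_and x x fun w u => w <+: u

theorem half_sum_sum_add_sub_two_mul {α : Type*} (s : Finset α) (a : α → ℝ) (b : α → α → ℝ) :
    (1 / 2 : ℝ) * ∑ u ∈ s, ∑ v ∈ s, (a u + a v - 2 * b u v) =
      #s * ∑ u ∈ s, a u - ∑ u ∈ s, ∑ v ∈ s, b u v := by
  simp only [sum_sub_distrib, sum_add_distrib, sum_const, nsmul_eq_mul, ← mul_sum]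
  ring

theorem harris_wiener_identity_general
    (x : Finset (List ℕ+))
    (h1 : ∀ u w : List ℕ+, u <+: w → w ∈ x → u ∈ x) :
    (∑ u ∈ x, ∑ v ∈ x, ((lcp u v).length : ℝ)) =
      (∑ u ∈ x, ((x.filter fun v => u <+: v).card : ℝ) ^ 2) - (x.card : ℝ) ^ 2 ∧
    (1 / 2 : ℝ) * ∑ u ∈ x, ∑ v ∈ x,
        ((u.length : ℝ) + (v.length : ℝ) - 2 * (lcp u v).length) =
      (x.card : ℝ) * (∑ u ∈ x, (u.length : ℝ)) + (x.card : ℝ) ^ 2 -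
        ∑ u ∈ x, ((x.filter fun v => u <+: v).card : ℝ) ^ 2 := by
  have lcp_sum : (∑ u ∈ x, ∑ v ∈ x, ((lcp u v).length : ℝ)) =
      (∑ u ∈ x, ((x.filter fun v => u <+: v).card : ℝ) ^ 2) - (x.card : ℝ) ^ 2 := by
    rw [eq_sub_iff_add_eq]
    exact_mod_cast sum_sum_lcp_length_add_card_sq h1
  refine ⟨lcp_sum, ?_⟩
  rw [half_sum_sum_add_sub_two_mul x (fun u => (u.length : ℝ)), lcp_sum]
  ring

/-- Let `x` be a Harris tree with `n` nodes: a finite nonempty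
prefix-closed set of finite sequences of positive integers in which a node with last entry
`i > 1` has all its earlier siblings.  Writing `#x(u)` for the number of elements of `x`
having `u` as a prefix, `TPL(x) = ∑_{u∈x} |u|` and `u∧v` for the longest common prefix,
one has `∑_{(u,v)∈x×x} |u∧v| = ∑_{u∈x} #x(u)² − n²` and consequently the Wiener index
`WI(x) = (1/2)∑_{(u,v)}(|u|+|v|−2|u∧v|)` equals `n·TPL(x) + n² − ∑_{u∈x} #x(u)²`. -/
theorem harris_wiener_identity
    (x : Finset (List ℕ+)) (hne : x.Nonempty)
    (h1 : ∀ u w : List ℕ+, u <+: w → w ∈ x → u ∈ x)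
    (h2 : ∀ (u : List ℕ+) (i : ℕ+), 1 < i → u ++ [i] ∈ x →
      ∀ j : ℕ+, j < i → u ++ [j] ∈ x) :
    (∑ u ∈ x, ∑ v ∈ x, ((lcp u v).length : ℝ)) =
      (∑ u ∈ x, ((x.filter fun v => u <+: v).card : ℝ) ^ 2) - (x.card : ℝ) ^ 2 ∧
    (1 / 2 : ℝ) * ∑ u ∈ x, ∑ v ∈ x,
        ((u.length : ℝ) + (v.length : ℝ) - 2 * (lcp u v).length) =
      (x.card : ℝ) * (∑ u ∈ x, (u.length : ℝ)) + (x.card : ℝ) ^ 2 -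
        ∑ u ∈ x, ((x.filter fun v => u <+: v).card : ℝ) ^ 2 :=
  harris_wiener_identity_general x h1
end

section
/- There is a unique map T on the set V of finite sequences of positive integers satisfying T(∅) = ∅, T((1)) = (1), and, whenever u is nonempty and T(u) = (v_1,…,v_j): T(u ++ (1)) = (v_1,…,v_{j−1}, v_j + 1) and T((u_1,…,u_{k−1}, u_k + 1)) = T(u) ++ (1) for u = (u_1,…,u_k). This map T is a bijection of V with T∘T = id, and it satisfies |T(u)|_1 − |T(u)| = |u| − 1 for every nonempty u ∈ V, where |u| denotes the length of u and |u|_1 the sum of its entries. -/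
/-- Increment the last entry of a list of positive integers
(`bumpLast (u₁,…,u_k) = (u₁,…,u_{k-1},u_k+1)`, with `bumpLast [] = []`). -/
def bumpLast : List ℕ+ → List ℕ+
  | [] => []
  | [a] => [a + 1]
  | a :: b :: l => a :: bumpLast (b :: l)

/-- The defining recursion for the map `T`: `T ∅ = ∅`, `T (1) = (1)`, and for nonempty `u`,
`T (u ++ (1))` increments the last entry of `T u`, while `T` of `u` with its last entry
incremented is `T u ++ (1)`. -/
def IsT (T : List ℕ+ → List ℕ+) : Prop :=
  T [] = [] ∧ T [1] = [1] ∧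
    (∀ u : List ℕ+, u ≠ [] → T (u ++ [1]) = bumpLast (T u)) ∧
    (∀ u : List ℕ+, u ≠ [] → T (bumpLast u) = T u ++ [1])

namespace T18

lemma bumpLast_concat (l : List ℕ+) (a : ℕ+) : bumpLast (l ++ [a]) = l ++ [a + 1] := by
  induction l with
  | nil => rfl
  | cons x l ih =>
    cases l with
    | nil => rfl
    | cons y l => simpa [bumpLast] using ih

lemma bumpLast_ne_nil {u : List ℕ+} (h : u ≠ []) : bumpLast u ≠ [] := by
  obtain (rfl | ⟨l, a, rfl⟩) := u.eq_nil_or_concat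
  · exact absurd rfl h
  · simp [List.concat_eq_append, bumpLast_concat]

/-- sum of entries as a natural number -/
def sumN (u : List ℕ+) : ℕ := (u.map fun m => (m : ℕ)).sum

lemma sumN_concat (l : List ℕ+) (a : ℕ+) : sumN (l ++ [a]) = sumN l + a := by
  simp [sumN]

lemma sumN_bumpLast {u : List ℕ+} (h : u ≠ []) : sumN (bumpLast u) = sumN u + 1 := by
  obtain (rfl | ⟨l, a, rfl⟩) := u.eq_nil_or_concat
  · exact absurd rfl h
  · simp only [List.concat_eq_append, bumpLast_concat, sumN_concat]
    push_cast
    ring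

lemma length_bumpLast (u : List ℕ+) : (bumpLast u).length = u.length := by
  obtain (rfl | ⟨l, a, rfl⟩) := u.eq_nil_or_concat
  · rfl
  · simp [List.concat_eq_append, bumpLast_concat]

/-- Every nonempty list is `[1]`, or `v ++ [1]`, or `bumpLast v` for smaller nonempty `v`. -/
lemma decomp (u : List ℕ+) (h : u ≠ []) :
    u = [1] ∨ (∃ v, v ≠ [] ∧ u = v ++ [1] ∧ sumN v < sumN u) ∨
      (∃ v, v ≠ [] ∧ u = bumpLast v ∧ sumN v < sumN u) := by
  obtain (rfl | ⟨l, a, rfl⟩) := u.eq_nil_or_concat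
  · exact absurd rfl h
  · rw [List.concat_eq_append]
    by_cases ha : a = 1
    · subst ha
      cases l with
      | nil => left; rfl
      | cons x l' =>
        right; left
        refine ⟨x :: l', by simp, rfl, ?_⟩
        rw [sumN_concat]
        simp
    · right; right
      obtain ⟨b, rfl⟩ := PNat.exists_eq_succ_of_ne_one ha
      refine ⟨l ++ [b], by simp, (bumpLast_concat l b).symm, ?_⟩
      simp only [sumN_concat]
      have : (b : ℕ) < ((b + 1 : ℕ+) : ℕ) := by
        push_cast; omega
      omega

/-! ### Construction of `T` -/

def encode : List ℕ+ → List Bool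
  | [] => []
  | [a] => List.replicate ((a : ℕ) - 1) true
  | a :: b :: l => List.replicate ((a : ℕ) - 1) true ++ false :: encode (b :: l)

def step (l : List ℕ+) (b : Bool) : List ℕ+ := if b then bumpLast l else l ++ [1]

def build (w : List Bool) : List ℕ+ := w.foldl step [1]

def Tdef (u : List ℕ+) : List ℕ+ := if u = [] then [] else build ((encode u).map not)

lemma build_concat (w : List Bool) (b : Bool) : build (w ++ [b]) = step (build w) b := by
  simp [build, List.foldl_append]

lemma encode_append_one : ∀ u : List ℕ+, u ≠ [] → encode (u ++ [1]) = encode u ++ [false]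
  | [], h => absurd rfl h
  | [a], _ => by
      simp [encode]
  | a :: b :: l, _ => by
      have ih := encode_append_one (b :: l) (by simp)
      simp only [List.cons_append] at ih ⊢
      simp [encode, ih]

lemma encode_bumpLast : ∀ u : List ℕ+, u ≠ [] → encode (bumpLast u) = encode u ++ [true]
  | [], h => absurd rfl h
  | [a], _ => by
      have hp : (a : ℕ) = ((a : ℕ) - 1) + 1 := by have := a.pos; omega
      have h1 : ((a + 1 : ℕ+) : ℕ) - 1 = (a : ℕ) := by push_cast; omega
      simp only [bumpLast, encode]
      rw [h1]
      conv_lhs => rw [hp]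
      rw [List.replicate_succ']
  | a :: b :: l, _ => by
      have ih := encode_bumpLast (b :: l) (by simp)
      obtain ⟨c, m, hm⟩ := List.exists_cons_of_ne_nil (bumpLast_ne_nil (u := b :: l) (by simp))
      simp only [bumpLast, encode]
      rw [hm]
      show List.replicate ((a : ℕ) - 1) true ++ false :: encode (c :: m) = _
      rw [← hm, ih]
      simp

lemma Tdef_isT : IsT Tdef := by
  refine ⟨rfl, ?_, ?_, ?_⟩
  · simp [Tdef, encode, build]
  · intro u hu
    rw [Tdef, if_neg (by simp), encode_append_one u hu, Tdef, if_neg hu]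
    simp [build_concat, step]
  · intro u hu
    rw [Tdef, if_neg (bumpLast_ne_nil hu), encode_bumpLast u hu, Tdef, if_neg hu]
    simp [build_concat, step]

/-! ### Properties of any `T` satisfying the recursion -/

lemma T_ne_nil {T : List ℕ+ → List ℕ+} (hT : IsT T) :
    ∀ u : List ℕ+, u ≠ [] → T u ≠ [] := by
  obtain ⟨h0, h1, hA, hB⟩ := hT
  suffices H : ∀ n u, sumN u = n → u ≠ [] → T u ≠ [] by
    exact fun u hu => H _ u rfl hu
  intro n
  induction n using Nat.strong_induction_on with
  | _ n ih =>
    rintro u rfl hu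
    rcases decomp u hu with rfl | ⟨v, hv, rfl, hlt⟩ | ⟨v, hv, rfl, hlt⟩
    · simp [h1]
    · rw [hA v hv]; exact bumpLast_ne_nil (ih _ hlt v rfl hv)
    · rw [hB v hv]; simp

lemma isT_unique {T₁ T₂ : List ℕ+ → List ℕ+} (h₁ : IsT T₁) (h₂ : IsT T₂) : T₁ = T₂ := by
  obtain ⟨h10, h11, h1A, h1B⟩ := h₁
  obtain ⟨h20, h21, h2A, h2B⟩ := h₂
  funext u
  rcases eq_or_ne u [] with rfl | hu
  · rw [h10, h20]
  suffices H : ∀ n u, sumN u = n → u ≠ [] → T₁ u = T₂ u by exact H _ u rfl hu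
  intro n
  induction n using Nat.strong_induction_on with
  | _ n ih =>
    rintro u rfl hu
    rcases decomp u hu with rfl | ⟨v, hv, rfl, hlt⟩ | ⟨v, hv, rfl, hlt⟩
    · rw [h11, h21]
    · rw [h1A v hv, h2A v hv, ih _ hlt v rfl hv]
    · rw [h1B v hv, h2B v hv, ih _ hlt v rfl hv]

lemma isT_invol {T : List ℕ+ → List ℕ+} (hT : IsT T) : ∀ u, T (T u) = u := by
  have hne := T_ne_nil hT
  obtain ⟨h0, h1, hA, hB⟩ := hT
  intro u
  rcases eq_or_ne u [] with rfl | hu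
  · rw [h0, h0]
  suffices H : ∀ n u, sumN u = n → u ≠ [] → T (T u) = u by exact H _ u rfl hu
  intro n
  induction n using Nat.strong_induction_on with
  | _ n ih =>
    rintro u rfl hu
    rcases decomp u hu with rfl | ⟨v, hv, rfl, hlt⟩ | ⟨v, hv, rfl, hlt⟩
    · rw [h1, h1]
    · rw [hA v hv, hB (T v) (hne v hv), ih _ hlt v rfl hv]
    · rw [hB v hv, hA (T v) (hne v hv), ih _ hlt v rfl hv]

lemma isT_sum {T : List ℕ+ → List ℕ+} (hT : IsT T) :
    ∀ u : List ℕ+, u ≠ [] →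
      ((sumN (T u) : ℤ) - ((T u).length : ℤ)) = (u.length : ℤ) - 1 := by
  have hne := T_ne_nil hT
  obtain ⟨h0, h1, hA, hB⟩ := hT
  suffices H : ∀ n u, sumN u = n → u ≠ [] →
      ((sumN (T u) : ℤ) - ((T u).length : ℤ)) = (u.length : ℤ) - 1 by
    exact fun u hu => H _ u rfl hu
  intro n
  induction n using Nat.strong_induction_on with
  | _ n ih =>
    rintro u rfl hu
    rcases decomp u hu with rfl | ⟨v, hv, rfl, hlt⟩ | ⟨v, hv, rfl, hlt⟩
    · rw [h1]; simp [sumN]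
    · have := ih _ hlt v rfl hv
      rw [hA v hv, sumN_bumpLast (hne v hv), length_bumpLast]
      push_cast
      simp only [List.length_append, List.length_cons, List.length_nil]
      push_cast
      omega
    · have := ih _ hlt v rfl hv
      rw [hB v hv, length_bumpLast]
      have hs : sumN (T v ++ [1]) = sumN (T v) + 1 := by simp [sumN_concat]
      rw [hs]
      simp only [List.length_append, List.length_cons, List.length_nil]
      push_cast
      omega

end T18

/-- There is a unique map `T` on the set of finite sequences of positive
integers satisfying the recursion above; it is a bijection, an involution, and satisfies
`|T u|₁ − |T u| = |u| − 1` for every nonempty `u`, where `|·|` is length and `|·|₁` the sum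
of the entries. -/
theorem T_exists_unique_involution :
    (∃! T : List ℕ+ → List ℕ+, IsT T) ∧
    ∀ T : List ℕ+ → List ℕ+, IsT T →
      Function.Bijective T ∧ T ∘ T = id ∧
      ∀ u : List ℕ+, u ≠ [] →
        ((((T u).map fun m => (m : ℕ)).sum : ℤ) - ((T u).length : ℤ)) =
          (u.length : ℤ) - 1 := by
  constructor
  · exact ⟨T18.Tdef, T18.Tdef_isT, fun T hT => T18.isT_unique hT T18.Tdef_isT⟩
  · intro T hT
    have inv : Function.Involutive T := T18.isT_invol hT
    refine ⟨inv.bijective, ?_, ?_⟩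
    · funext u; exact inv u
    · exact fun u hu => T18.isT_sum hT u hu
end

section
/- For every n ≥ 2, the random variables TPL_n − (n−1) and HPL_n have the same distribution. -/
/-!
Rotate the tree: in the rotated tree, a node hangs below its immediately older sibling if it has
one, and otherwise below the rotated parent of its own parent. This map on attachment sequences is
an involution, and it turns the depth of every node `v ≥ 2` into its horizontal position plus one,
so it carries `TPL_n - (n - 1)` to `HPL_n`. Since `(J_1, …, J_{n-1})` is uniform on the attachment
sequences, its law is invariant under this bijection, and the two statistics have the same law.
-/

open MeasureTheory ProbabilityTheory

lemma ae_mem_of_measure_eq_zero {Ω α : Type*} [MeasurableSpace Ω] {μ : Measure Ω} [Countable α]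
    {X : Ω → α} {T : Set α} (h : ∀ a ∉ T, μ {ω | X ω = a} = 0) : ∀ᵐ ω ∂μ, X ω ∈ T := by
  rw [ae_iff]
  have : {ω | X ω ∉ T} = ⋃ a ∈ Tᶜ, {ω | X ω = a} := by ext; simp
  rw [this, measure_biUnion_null_iff (Set.to_countable _)]
  exact h

lemma map_pi_eq_sum_smul_dirac {Ω ι α : Type*} [MeasurableSpace Ω] {μ : Measure Ω}
    [Fintype ι] [DecidableEq ι] [DecidableEq α] [MeasurableSpace α] [Countable α]
    [MeasurableSingletonClass α]
    {X : ι → Ω → α} (hXmeas : ∀ i, Measurable (X i)) (hXindep : iIndepFun X μ)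
    {T : ι → Finset α} {c : ι → ENNReal}
    (hXlaw : ∀ i a, μ {ω | X i ω = a} = if a ∈ T i then c i else 0) :
    μ.map (fun ω i => X i ω) = ∑ s ∈ Fintype.piFinset T, (∏ i, c i) • Measure.dirac s := by
  refine Measure.ext_of_singleton fun x => ?_
  have hpre : (fun ω i => X i ω) ⁻¹' {x} = ⋂ i, X i ⁻¹' {x i} := by
    ext ω; simp [funext_iff]
  rw [Measure.map_apply (measurable_pi_lambda _ hXmeas) (measurableSet_singleton x), hpre,
    hXindep.meas_iInter fun i => ⟨{x i}, measurableSet_singleton _, rfl⟩]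
  simp only [Set.preimage, Set.mem_singleton_iff, hXlaw, Finset.prod_ite_zero,
    Measure.finsetSum_apply, Measure.smul_apply, Measure.dirac_apply, smul_eq_mul]
  simp [Set.indicator_apply, Fintype.mem_piFinset]

lemma map_sum_smul_dirac_eq_of_bijOn {α β : Type*} [MeasurableSpace α] [Countable α]
    [MeasurableSingletonClass α] [MeasurableSpace β] (S : Finset α) (w : ENNReal) {Φ : α → α}
    (hΦ : Set.BijOn Φ S S) {F G : α → β} (hFG : ∀ s ∈ S, F s = G (Φ s)) :
    (∑ s ∈ S, w • Measure.dirac s).map F = (∑ s ∈ S, w • Measure.dirac s).map G := by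
  ext A hA
  rw [Measure.map_apply (measurable_of_countable F) hA,
    Measure.map_apply (measurable_of_countable G) hA]
  simp only [Measure.finsetSum_apply, Measure.smul_apply, Measure.dirac_apply, smul_eq_mul]
  refine Finset.sum_nbij Φ hΦ.mapsTo hΦ.injOn hΦ.surjOn fun s hs => ?_
  classical
  simp only [Set.indicator_apply, Set.mem_preimage, hFG s hs, Pi.one_apply]

namespace RandomRecursiveTree

/- Nodes are numbered from `1` and `j k` is the parent of node `k + 2`, so `childrenBefore j a k`
lists by their indices `m` the children `m + 2` of `a` among the nodes `2, …, k + 1`. -/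

def IsAttachment (j : ℕ → ℕ) : Prop := ∀ k, 1 ≤ j k ∧ j k ≤ k + 1

def childrenBefore (j : ℕ → ℕ) (a k : ℕ) : Finset ℕ :=
  (Finset.range k).filter fun m => j m = a

-- The guard `j k < k + 2` only ensures termination.
def depth (j : ℕ → ℕ) : ℕ → ℕ
  | 0 => 0
  | 1 => 0
  | k + 2 => if _h : j k < k + 2 then depth j (j k) + 1 else 0

def horizPos (j : ℕ → ℕ) : ℕ → ℕ
  | 0 => 0
  | 1 => 0
  | k + 2 => if _h : j k < k + 2 then horizPos j (j k) + (childrenBefore j (j k) k).card else 0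

/-- The parent of node `k + 2` in the rotated tree. -/
def rotation (j : ℕ → ℕ) (k : ℕ) : ℕ :=
  if h : (childrenBefore j (j k) k).Nonempty then (childrenBefore j (j k) k).max' h + 2
  else if h' : 3 ≤ j k ∧ j k - 2 < k then rotation j (j k - 2) else 1

def rotationParent (j : ℕ → ℕ) (a : ℕ) : ℕ := if 3 ≤ a then rotation j (a - 2) else 1

variable {j : ℕ → ℕ}

@[simp] lemma mem_childrenBefore {a k m : ℕ} : m ∈ childrenBefore j a k ↔ m < k ∧ j m = a := by
  simp [childrenBefore]

lemma childrenBefore_eq_empty_of_le {a k k' : ℕ} (h : k ≤ k')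
    (h' : childrenBefore j a k' = ∅) : childrenBefore j a k = ∅ :=
  Finset.eq_empty_of_forall_notMem fun m hm => by
    obtain ⟨hmk, hm⟩ := mem_childrenBefore.1 hm
    simpa [h'] using mem_childrenBefore.2 ⟨hmk.trans_le h, hm⟩

lemma childrenBefore_congr {j' : ℕ → ℕ} {a k : ℕ} (h : ∀ m < k, j m = j' m) :
    childrenBefore j a k = childrenBefore j' a k :=
  Finset.filter_congr fun m hm => by rw [h m (Finset.mem_range.1 hm)]

@[simp] lemma depth_one : depth j 1 = 0 := by rw [depth]

lemma depth_add_two {k : ℕ} (h : j k ≤ k + 1) : depth j (k + 2) = depth j (j k) + 1 := by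
  rw [depth, dif_pos (by omega)]

@[simp] lemma horizPos_one : horizPos j 1 = 0 := by rw [horizPos]

lemma horizPos_add_two {k : ℕ} (h : j k ≤ k + 1) :
    horizPos j (k + 2) = horizPos j (j k) + (childrenBefore j (j k) k).card := by
  rw [horizPos, dif_pos (by omega)]

lemma rotation_of_nonempty {k : ℕ} (h : (childrenBefore j (j k) k).Nonempty) :
    rotation j k = (childrenBefore j (j k) k).max' h + 2 := by
  rw [rotation, dif_pos h]

lemma rotation_congr {j' : ℕ → ℕ} {k : ℕ} (h : ∀ m ≤ k, j m = j' m) :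
    rotation j k = rotation j' k := by
  induction k using Nat.strong_induction_on with
  | _ k ih =>
    have hC : childrenBefore j (j' k) k = childrenBefore j' (j' k) k :=
      childrenBefore_congr fun m hm => h m hm.le
    rw [rotation.eq_1 j k, rotation.eq_1 j' k]
    simp only [h k le_rfl, hC]
    split_ifs with h₁ h₂
    · rfl
    · exact ih _ h₂.2 fun m hm => h m (by omega)
    · rfl

lemma IsAttachment.zero (hj : IsAttachment j) : j 0 = 1 := by have := hj 0; omega

lemma IsAttachment.two_le_of_eq_empty (hj : IsAttachment j) {k : ℕ} (hk : 1 ≤ k)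
    (h : childrenBefore j (j k) k = ∅) : 2 ≤ j k := by
  by_contra h1
  have : 0 ∈ childrenBefore j (j k) k :=
    mem_childrenBefore.2 ⟨hk, by have := hj k; have := hj.zero; omega⟩
  simp [h] at this

lemma rotation_of_eq_empty (hj : IsAttachment j) {k : ℕ} (h : childrenBefore j (j k) k = ∅) :
    rotation j k = rotationParent j (j k) := by
  have := hj k
  rw [rotation, dif_neg (by simp [h]), rotationParent]
  split_ifs <;> first | rfl | omega

lemma rotation_zero (hj : IsAttachment j) : rotation j 0 = 1 := by
  rw [rotation_of_eq_empty hj (by simp [childrenBefore]), rotationParent, hj.zero]; rfl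

lemma rotationParent_add_two (hj : IsAttachment j) (k : ℕ) :
    rotationParent j (k + 2) = rotation j k := by
  rcases k with _ | k
  · simp [rotationParent, rotation_zero hj]
  · simp [rotationParent]

lemma isAttachment_rotation (hj : IsAttachment j) : IsAttachment (rotation j) := by
  intro k
  induction k using Nat.strong_induction_on with
  | _ k ih =>
    by_cases h : (childrenBefore j (j k) k).Nonempty
    · have := (mem_childrenBefore.1 (Finset.max'_mem _ h)).1
      rw [rotation_of_nonempty h]; omega
    · rw [Finset.not_nonempty_iff_eq_empty] at h
      have := hj k
      rw [rotation_of_eq_empty hj h, rotationParent]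
      split_ifs
      · have := ih (j k - 2) (by omega); omega
      · omega

lemma exists_rotation_eq_max' (hj : IsAttachment j) {i : ℕ} (hi : 2 ≤ rotation j i) :
    ∃ i' ≤ i, ∃ h : (childrenBefore j (j i') i').Nonempty,
      rotation j i = (childrenBefore j (j i') i').max' h + 2 := by
  induction i using Nat.strong_induction_on with
  | _ i ih =>
    by_cases h : (childrenBefore j (j i) i).Nonempty
    · exact ⟨i, le_rfl, h, rotation_of_nonempty h⟩
    · rw [Finset.not_nonempty_iff_eq_empty] at h
      have := hj i
      rw [rotation_of_eq_empty hj h, rotationParent] at hi ⊢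
      split_ifs at hi ⊢ with h3
      · obtain ⟨i', hi', h', heq⟩ := ih (j i - 2) (by omega) hi
        exact ⟨i', by omega, h', heq⟩
      · omega

-- `rotation j k` is then the previous sibling of node `k + 2`, a value not taken before.
lemma rotationParent_ne_rotation_of_nonempty (hj : IsAttachment j) {k w : ℕ}
    (h : (childrenBefore j (j k) k).Nonempty) (hw : w ≤ k + 1) :
    rotationParent j w ≠ rotation j k := by
  rw [rotation_of_nonempty h]
  have hm := mem_childrenBefore.1 (Finset.max'_mem _ h)
  unfold rotationParent
  split_ifs with h3
  · intro heq
    obtain ⟨i, hi, h', heq'⟩ := exists_rotation_eq_max' hj (i := w - 2) (by omega)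
    have hmax : (childrenBefore j (j i) i).max' h' = (childrenBefore j (j k) k).max' h := by
      omega
    have hm' := mem_childrenBefore.1 (hmax ▸ Finset.max'_mem _ h')
    have hik : i ∈ childrenBefore j (j k) k :=
      mem_childrenBefore.2 ⟨by omega, hm'.2.symm.trans hm.2⟩
    have := Finset.le_max' _ _ hik
    omega
  · omega

-- The set is that of the non-root leaves of the tree on `k + 1` nodes.
lemma rotationParent_injOn (hj : IsAttachment j) (k : ℕ) :
    Set.InjOn (rotationParent j) {u | 2 ≤ u ∧ u ≤ k + 1 ∧ childrenBefore j u k = ∅} := by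
  induction k with
  | zero => rintro u ⟨hu2, hu1, -⟩; omega
  | succ k ih =>
    have hnew : ∀ w, 2 ≤ w → w ≤ k + 1 → childrenBefore j w (k + 1) = ∅ →
        rotationParent j (k + 2) ≠ rotationParent j w := by
      intro w hw2 hw hw0
      rw [rotationParent_add_two hj]
      by_cases h : (childrenBefore j (j k) k).Nonempty
      · exact (rotationParent_ne_rotation_of_nonempty hj h hw).symm
      rw [Finset.not_nonempty_iff_eq_empty] at h
      rw [rotation_of_eq_empty hj h]
      have hjk : j k ≠ w := by
        rintro rfl
        have : k ∈ childrenBefore j (j k) (k + 1) := mem_childrenBefore.2 ⟨by omega, rfl⟩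
        simp [hw0] at this
      refine fun heq => hjk (ih ?_ ?_ heq)
      · exact ⟨hj.two_le_of_eq_empty (by omega) h, (hj k).2, h⟩
      · exact ⟨hw2, hw, childrenBefore_eq_empty_of_le k.le_succ hw0⟩
    rintro u ⟨hu2, hu1, hu0⟩ w ⟨hw2, hw1, hw0⟩ heq
    by_contra hne
    rcases Nat.lt_or_ge u (k + 2) with hu' | hu' <;> rcases Nat.lt_or_ge w (k + 2) with hw' | hw'
    · exact hne (ih ⟨hu2, by omega, childrenBefore_eq_empty_of_le k.le_succ hu0⟩
        ⟨hw2, by omega, childrenBefore_eq_empty_of_le k.le_succ hw0⟩ heq)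
    · exact hnew u hu2 (by omega) hu0 (by rw [show k + 2 = w by omega]; exact heq.symm)
    · exact hnew w hw2 (by omega) hw0 (by rw [show k + 2 = u by omega]; exact heq)
    · omega

lemma rotation_ne_of_eq_empty (hj : IsAttachment j) {k m : ℕ}
    (h : childrenBefore j (j k) k = ∅) (hm : j k - 2 < m) (hmk : m < k) :
    rotation j m ≠ rotation j k := by
  have := hj k
  have hw2 : 2 ≤ j k := hj.two_le_of_eq_empty (by omega) h
  rw [rotation_of_eq_empty hj h]
  by_cases hm' : (childrenBefore j (j m) m).Nonempty
  · exact (rotationParent_ne_rotation_of_nonempty hj hm' (by omega)).symm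
  rw [Finset.not_nonempty_iff_eq_empty] at hm'
  rw [rotation_of_eq_empty hj hm']
  intro heq
  have hjm : j m = j k := rotationParent_injOn hj m
    ⟨hj.two_le_of_eq_empty (by omega) hm', (hj m).2, hm'⟩
    ⟨hw2, by omega, childrenBefore_eq_empty_of_le hmk.le h⟩ heq
  have : m ∈ childrenBefore j (j k) k := mem_childrenBefore.2 ⟨hmk, hjm⟩
  simp [h] at this

lemma childrenBefore_rotation_of_nonempty (hj : IsAttachment j) {k : ℕ}
    (h : (childrenBefore j (j k) k).Nonempty) :
    childrenBefore (rotation j) (rotation j k) k = ∅ :=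
  Finset.eq_empty_of_forall_notMem fun m hm => by
    obtain ⟨hmk, hm⟩ := mem_childrenBefore.1 hm
    exact rotationParent_ne_rotation_of_nonempty hj h (w := m + 2) (by omega)
      (by rw [rotationParent_add_two hj, hm])

lemma rotation_eq_rotation_sub_two (hj : IsAttachment j) {k : ℕ} (hk : 1 ≤ k)
    (h : childrenBefore j (j k) k = ∅) : rotation j k = rotation j (j k - 2) := by
  obtain ⟨i, hi⟩ : ∃ i, j k = i + 2 := ⟨j k - 2, by have := hj.two_le_of_eq_empty hk h; omega⟩
  rw [rotation_of_eq_empty hj h, hi, rotationParent_add_two hj, Nat.add_sub_cancel]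

-- In the rotated tree a first child is the next younger sibling of its parent, so its older
-- siblings are its parent `j k` and the older siblings of `j k`.
lemma childrenBefore_rotation_of_eq_empty (hj : IsAttachment j) {k : ℕ} (hk : 1 ≤ k)
    (h : childrenBefore j (j k) k = ∅) :
    childrenBefore (rotation j) (rotation j k) k =
      insert (j k - 2) (childrenBefore (rotation j) (rotation j (j k - 2)) (j k - 2)) := by
  have hrot := rotation_eq_rotation_sub_two hj hk h
  have := hj k
  ext m
  simp only [Finset.mem_insert, mem_childrenBefore, hrot]
  constructor
  · rintro ⟨hmk, hm⟩
    rcases lt_trichotomy m (j k - 2) with hlt | heq | hgt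
    · exact Or.inr ⟨hlt, hm⟩
    · exact Or.inl heq
    · exact absurd (hm.trans hrot.symm) (rotation_ne_of_eq_empty hj h hgt hmk)
  · rintro (rfl | ⟨hlt, hm⟩)
    · exact ⟨by omega, rfl⟩
    · exact ⟨by omega, hm⟩

lemma depth_eq_horizPos_rotation_add_one (hj : IsAttachment j) (k : ℕ) :
    depth j (k + 2) = horizPos (rotation j) (k + 2) + 1 := by
  induction k using Nat.strong_induction_on with
  | _ k ih =>
    have hrot := isAttachment_rotation hj
    rw [depth_add_two (hj k).2, horizPos_add_two (hrot k).2]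
    by_cases h : (childrenBefore j (j k) k).Nonempty
    · obtain ⟨hmk, hm⟩ := mem_childrenBefore.1 (Finset.max'_mem _ h)
      rw [childrenBefore_rotation_of_nonempty hj h, Finset.card_empty, rotation_of_nonempty h,
        ← ih _ hmk, depth_add_two (hj _).2, hm]
    rw [Finset.not_nonempty_iff_eq_empty] at h
    rcases Nat.eq_zero_or_pos k with rfl | hk
    · simp [hj.zero, rotation_zero hj, childrenBefore]
    obtain ⟨i, hi⟩ : ∃ i, j k = i + 2 := ⟨j k - 2, by have := hj.two_le_of_eq_empty hk h; omega⟩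
    have hik : i < k := by have := hj k; omega
    rw [childrenBefore_rotation_of_eq_empty hj hk h, rotation_eq_rotation_sub_two hj hk h, hi,
      Nat.add_sub_cancel, Finset.card_insert_of_notMem (by simp), ih i hik,
      horizPos_add_two (hrot i).2]
    ring

lemma rotation_rotation (hj : IsAttachment j) (k : ℕ) : rotation (rotation j) k = j k := by
  induction k using Nat.strong_induction_on with
  | _ k ih =>
    have hrot := isAttachment_rotation hj
    by_cases h : (childrenBefore j (j k) k).Nonempty
    · obtain ⟨hmk, hm⟩ := mem_childrenBefore.1 (Finset.max'_mem _ h)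
      rw [rotation_of_eq_empty hrot (childrenBefore_rotation_of_nonempty hj h),
        rotation_of_nonempty h, rotationParent_add_two hrot, ih _ hmk, hm]
    rw [Finset.not_nonempty_iff_eq_empty] at h
    rcases Nat.eq_zero_or_pos k with rfl | hk
    · rw [rotation_zero hrot, hj.zero]
    have hC := childrenBefore_rotation_of_eq_empty hj hk h
    have hne : (childrenBefore (rotation j) (rotation j k) k).Nonempty :=
      hC ▸ Finset.insert_nonempty _ _
    have hmax : (childrenBefore (rotation j) (rotation j k) k).max' hne = j k - 2 := by
      refine (Finset.max'_eq_iff _ _ _).2 ⟨hC ▸ Finset.mem_insert_self _ _, fun m hm => ?_⟩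
      rw [hC, Finset.mem_insert, mem_childrenBefore] at hm
      omega
    rw [rotation_of_nonempty hne, hmax]
    have := hj.two_le_of_eq_empty hk h
    omega

lemma depth_eq_of_rec (hj : IsAttachment j) {N : ℕ} {d : ℕ → ℕ} (h1 : d 1 = 0)
    (h : ∀ k < N, d (k + 2) = d (j k) + 1) : Set.EqOn d (depth j) (Set.Icc 1 (N + 1)) := by
  intro v hv
  induction v using Nat.strong_induction_on with
  | _ v ih =>
    obtain ⟨hv1, hvN⟩ := hv
    rcases v with _ | _ | k
    · omega
    · simpa using h1
    · have := hj k
      rw [h k (by omega), depth_add_two this.2, ih _ (by omega) ⟨this.1, by omega⟩]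

lemma horizPos_eq_of_rec (hj : IsAttachment j) {N : ℕ} {r : ℕ → ℕ} (h1 : r 1 = 0)
    (h : ∀ k < N, r (k + 2) = r (j k) + (childrenBefore j (j k) k).card) :
    Set.EqOn r (horizPos j) (Set.Icc 1 (N + 1)) := by
  intro v hv
  induction v using Nat.strong_induction_on with
  | _ v ih =>
    obtain ⟨hv1, hvN⟩ := hv
    rcases v with _ | _ | k
    · omega
    · simpa using h1
    · have := hj k
      rw [h k (by omega), horizPos_add_two this.2, ih _ (by omega) ⟨this.1, by omega⟩]

lemma sum_depth_sub_eq_sum_horizPos_rotation (hj : IsAttachment j) {n : ℕ} (hn : 1 ≤ n) :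
    ∑ v ∈ Finset.Icc 1 n, (depth j v : ℤ) - (n - 1) =
      ∑ v ∈ Finset.Icc 1 n, (horizPos (rotation j) v : ℤ) := by
  have hIcc : Finset.Icc 1 n = insert 1 (Finset.Icc 2 n) := by
    ext x; simp only [Finset.mem_Icc, Finset.mem_insert]; omega
  have hcard : ((Finset.Icc 2 n).card : ℤ) = n - 1 := by simp; omega
  have key : ∀ v ∈ Finset.Icc 2 n, (depth j v : ℤ) = (horizPos (rotation j) v : ℤ) + 1 := by
    intro v hv
    obtain ⟨k, rfl⟩ : ∃ k, v = k + 2 := ⟨v - 2, by simp at hv; omega⟩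
    exact_mod_cast depth_eq_horizPos_rotation_add_one hj k
  rw [hIcc, Finset.sum_insert (by simp), Finset.sum_insert (by simp), Finset.sum_congr rfl key,
    Finset.sum_add_distrib, Finset.sum_const, nsmul_one, hcard]
  simp

def attachments (N : ℕ) : Finset (Fin N → ℕ) :=
  Fintype.piFinset fun k => Finset.Icc 1 (k + 1)

-- Padded with `1`, so that `extend s` is an attachment sequence whenever `s` is.
def extend {N : ℕ} (s : Fin N → ℕ) (m : ℕ) : ℕ := if h : m < N then s ⟨m, h⟩ else 1

lemma extend_of_lt {N : ℕ} (s : Fin N → ℕ) {m : ℕ} (h : m < N) : extend s m = s ⟨m, h⟩ :=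
  dif_pos h

lemma isAttachment_extend {N : ℕ} {s : Fin N → ℕ} (hs : s ∈ attachments N) :
    IsAttachment (extend s) := by
  intro m
  by_cases h : m < N
  · simpa [extend_of_lt s h] using Fintype.mem_piFinset.1 hs ⟨m, h⟩
  · simp [extend, h]

lemma restrict_mem_attachments (hj : IsAttachment j) (N : ℕ) :
    (fun k : Fin N => j k) ∈ attachments N :=
  Fintype.mem_piFinset.2 fun k => Finset.mem_Icc.2 (hj k)

def rotationFin {N : ℕ} (s : Fin N → ℕ) : Fin N → ℕ := fun k => rotation (extend s) k

lemma rotationFin_rotationFin {N : ℕ} {s : Fin N → ℕ} (hs : s ∈ attachments N) :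
    rotationFin (rotationFin s) = s := by
  funext k
  have hagree : ∀ m ≤ (k : ℕ), extend (rotationFin s) m = rotation (extend s) m := fun m hm =>
    extend_of_lt _ (by omega)
  rw [rotationFin, rotation_congr hagree, rotation_rotation (isAttachment_extend hs),
    extend_of_lt s k.2]

lemma bijOn_rotationFin (N : ℕ) : Set.BijOn rotationFin (attachments N : Set (Fin N → ℕ))
    (attachments N) := by
  have hmaps : Set.MapsTo rotationFin (attachments N : Set (Fin N → ℕ)) (attachments N) :=
    fun s hs => restrict_mem_attachments (isAttachment_rotation (isAttachment_extend hs)) N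
  exact Set.InvOn.bijOn
    ⟨fun s hs => rotationFin_rotationFin hs, fun s hs => rotationFin_rotationFin hs⟩ hmaps hmaps

lemma sum_depth_extend_sub_eq_sum_horizPos_extend_rotationFin {N n : ℕ} (hn : 1 ≤ n)
    (hnN : n ≤ N + 1) {s : Fin N → ℕ} (hs : s ∈ attachments N) :
    ∑ v ∈ Finset.Icc 1 n, (depth (extend s) v : ℤ) - (n - 1) =
      ∑ v ∈ Finset.Icc 1 n, (horizPos (extend (rotationFin s)) v : ℤ) := by
  have hj := isAttachment_extend hs
  have hrot := isAttachment_rotation hj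
  rw [sum_depth_sub_eq_sum_horizPos_rotation hj hn]
  refine Finset.sum_congr rfl fun v hv => ?_
  have hagree : ∀ m < N, extend (rotationFin s) m = rotation (extend s) m := fun m hm =>
    extend_of_lt _ hm
  have := horizPos_eq_of_rec (isAttachment_extend ((bijOn_rotationFin N).mapsTo hs)) (N := N)
    (r := horizPos (rotation (extend s))) horizPos_one fun k hk => by
      rw [hagree k hk, horizPos_add_two (hrot k).2,
        childrenBefore_congr fun m hm => hagree m (by omega)]
  rw [this (by simp at hv ⊢; omega)]

lemma sum_eq_sum_depth_extend (hj : IsAttachment j) {N n : ℕ} (hnN : n ≤ N + 1) {d : ℕ → ℕ}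
    (h1 : d 1 = 0) (h : ∀ k, d (k + 2) = d (j k) + 1) :
    ∑ v ∈ Finset.Icc 1 n, (d v : ℤ) =
      ∑ v ∈ Finset.Icc 1 n, (depth (extend fun k : Fin N => j k) v : ℤ) := by
  have := depth_eq_of_rec (isAttachment_extend (restrict_mem_attachments hj N)) h1
    fun k hk => by rw [h, extend_of_lt _ hk]
  exact Finset.sum_congr rfl fun v hv => by rw [this (by simp at hv ⊢; omega)]

lemma sum_eq_sum_horizPos_extend (hj : IsAttachment j) {N n : ℕ} (hnN : n ≤ N + 1) {r : ℕ → ℕ}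
    (h1 : r 1 = 0) (h : ∀ k, r (k + 2) = r (j k) + (childrenBefore j (j k) k).card) :
    ∑ v ∈ Finset.Icc 1 n, (r v : ℤ) =
      ∑ v ∈ Finset.Icc 1 n, (horizPos (extend fun k : Fin N => j k) v : ℤ) := by
  have hagree : ∀ m < N, extend (fun k : Fin N => j k) m = j m := fun m hm => extend_of_lt _ hm
  have := horizPos_eq_of_rec (isAttachment_extend (restrict_mem_attachments hj N)) h1
    fun k hk => by
      rw [h, hagree k hk, childrenBefore_congr fun m hm => (hagree m (by omega)).symm]
  exact Finset.sum_congr rfl fun v hv => by rw [this (by simp at hv ⊢; omega)]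

end RandomRecursiveTree

open RandomRecursiveTree in
-- `J k` is the paper's `J_{k+1}`, uniform on `{1, …, k + 1}`.
theorem rrt_tpl_hpl_same_distribution_general
    {Ω : Type*} [MeasurableSpace Ω] (μ : Measure Ω)
    (J : ℕ → Ω → ℕ) (hJmeas : ∀ k, Measurable (J k))
    (hJindep : iIndepFun J μ)
    (hJlaw : ∀ k j, μ {ω | J k ω = j} =
      if j ∈ Finset.Icc 1 (k + 1) then ((k : ENNReal) + 1)⁻¹ else 0)
    (D : ℕ → Ω → ℕ)
    (hD1 : ∀ ω, D 1 ω = 0)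
    (hD : ∀ k ω, D (k + 2) ω = D (J k ω) ω + 1)
    (R : ℕ → Ω → ℕ)
    (hR1 : ∀ ω, R 1 ω = 0)
    (hR : ∀ k ω, R (k + 2) ω =
      R (J k ω) ω + ((Finset.range k).filter fun m => J m ω = J k ω).card) :
    ∀ n : ℕ, 2 ≤ n →
      Measure.map (fun ω => (∑ k ∈ Finset.Icc 1 n, (D k ω : ℤ)) - ((n : ℤ) - 1)) μ =
      Measure.map (fun ω => ∑ k ∈ Finset.Icc 1 n, (R k ω : ℤ)) μ := by
  intro n hn
  set N := n - 1
  let X : Ω → Fin N → ℕ := fun ω k => J k ω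
  let F : (Fin N → ℕ) → ℤ := fun s => ∑ v ∈ Finset.Icc 1 n, (depth (extend s) v : ℤ) - (n - 1)
  let G : (Fin N → ℕ) → ℤ := fun s => ∑ v ∈ Finset.Icc 1 n, (horizPos (extend s) v : ℤ)
  have hX : Measurable X := measurable_pi_lambda _ fun k => hJmeas k
  have hgood : ∀ᵐ ω ∂μ, IsAttachment fun k => J k ω := by
    filter_upwards [ae_all_iff.2 fun k =>
      ae_mem_of_measure_eq_zero (X := J k) (T := ↑(Finset.Icc 1 (k + 1))) fun a ha => by
        rw [hJlaw]; exact if_neg ha] with ω hω k using Finset.mem_Icc.1 (hω k)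
  have hTPL : (fun ω => (∑ k ∈ Finset.Icc 1 n, (D k ω : ℤ)) - ((n : ℤ) - 1)) =ᵐ[μ] F ∘ X := by
    filter_upwards [hgood] with ω hω
    simp only [Function.comp_apply, F, X]
    rw [sum_eq_sum_depth_extend hω (N := N) (by omega) (hD1 ω) (hD · ω)]
  have hHPL : (fun ω => ∑ k ∈ Finset.Icc 1 n, (R k ω : ℤ)) =ᵐ[μ] G ∘ X := by
    filter_upwards [hgood] with ω hω
    exact sum_eq_sum_horizPos_extend hω (N := N) (by omega) (hR1 ω) (hR · ω)
  rw [Measure.map_congr hTPL, Measure.map_congr hHPL,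
    ← Measure.map_map (measurable_of_countable F) hX,
    ← Measure.map_map (measurable_of_countable G) hX,
    map_pi_eq_sum_smul_dirac (X := fun k : Fin N => J k) (fun k => hJmeas k)
      (hJindep.precomp Fin.val_injective)
      (fun k a => hJlaw k a)]
  exact map_sum_smul_dirac_eq_of_bijOn _ _ (bijOn_rotationFin N) fun s hs =>
    sum_depth_extend_sub_eq_sum_horizPos_extend_rotationFin (by omega) (by omega) hs

/-- In the random recursive tree chain (here `J k` stands for the paper's
`J_{k+1}`, uniform on `{1,…,k+1}`), with depths `D 1 = 0`, `D (k+2) = D (J k) + 1`,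
horizontal positions `R 1 = 0`, `R (k+2) = R (J k) + #{m < k : J m = J k}`,
`TPL_n = ∑_{k=1}^n D k` and `HPL_n = ∑_{k=1}^n R k`, the random variables
`TPL_n − (n−1)` and `HPL_n` have the same distribution for every `n ≥ 2`. -/
theorem rrt_tpl_hpl_same_distribution
    {Ω : Type*} [MeasurableSpace Ω] (μ : Measure Ω) [IsProbabilityMeasure μ]
    (J : ℕ → Ω → ℕ) (hJmeas : ∀ k, Measurable (J k))
    (hJindep : iIndepFun J μ)
    (hJlaw : ∀ k j, μ {ω | J k ω = j} =
      if j ∈ Finset.Icc 1 (k + 1) then ((k : ENNReal) + 1)⁻¹ else 0)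
    (D : ℕ → Ω → ℕ) (hDmeas : ∀ n, Measurable (D n))
    (hD1 : ∀ ω, D 1 ω = 0)
    (hD : ∀ k ω, D (k + 2) ω = D (J k ω) ω + 1)
    (R : ℕ → Ω → ℕ) (hRmeas : ∀ n, Measurable (R n))
    (hR1 : ∀ ω, R 1 ω = 0)
    (hR : ∀ k ω, R (k + 2) ω =
      R (J k ω) ω + ((Finset.range k).filter fun m => J m ω = J k ω).card) :
    ∀ n : ℕ, 2 ≤ n →
      Measure.map (fun ω => (∑ k ∈ Finset.Icc 1 n, (D k ω : ℤ)) - ((n : ℤ) - 1)) μ =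
      Measure.map (fun ω => ∑ k ∈ Finset.Icc 1 n, (R k ω : ℤ)) μ :=
  rrt_tpl_hpl_same_distribution_general μ J hJmeas hJindep hJlaw D hD1 hD R hR1 hR
end
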